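/- arXiv:1604.04989 — 13 statements merged into one kernel-verified Lean document; each statement's English description precedes it below -/
import Mathlib

section
/- Suppose u, a, b, c satisfy the 3A Griess relations. Set v = −(5/14)u + (16/21)(a + b + c). Then v·v = 2v, u·v = 0, (u|v) = 0, (v|v) = 3/7 (so v is a Virasoro-type idempotent of central charge 2(v|v) = 6/7 orthogonal to u), and (u + v)·w = 2w for every w in the linear span of {u, a, b, c} (i.e. u + v acts as twice the identity on the Griess algebra of the 3A-algebra). -/
/-!
Every identity is an expansion by bilinearity against the multiplication table and the Gram
matrix of `u, a, b, c`. The relations are invariant under the cyclic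
permutation `a → b → c → a`, which fixes `v`, so for the action of `u + v` on the spanning set it
suffices to treat `u` (where it follows from `u·u = 2u` and `u·v = 0`) and `a`.
-/

section

variable {K V : Type*} [Field K] [AddCommGroup V] [Module K V]

structure IsGriess3A (mul : V →ₗ[K] V →ₗ[K] V) (u a b c : V) : Prop where
  comm : ∀ s t : V, mul s t = mul t s
  uu : mul u u = (2 : K) • u
  aa : mul a a = (2 : K) • a
  bb : mul b b = (2 : K) • b
  cc : mul c c = (2 : K) • c
  ab : mul a b = -(135 / 2 ^ 10 : K) • u + (1 / 8 : K) • (a + b) + (1 / 16 : K) • c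
  bc : mul b c = -(135 / 2 ^ 10 : K) • u + (1 / 8 : K) • (b + c) + (1 / 16 : K) • a
  ca : mul c a = -(135 / 2 ^ 10 : K) • u + (1 / 8 : K) • (c + a) + (1 / 16 : K) • b
  ua : mul u a = (5 / 16 : K) • u + (4 / 9 : K) • a - (2 / 9 : K) • (b + c)
  ub : mul u b = (5 / 16 : K) • u + (4 / 9 : K) • b - (2 / 9 : K) • (c + a)
  uc : mul u c = (5 / 16 : K) • u + (4 / 9 : K) • c - (2 / 9 : K) • (a + b)

structure IsGriess3AForm (B : V →ₗ[K] V →ₗ[K] K) (u a b c : V) : Prop where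
  symm : ∀ s t : V, B s t = B t s
  uu : B u u = 2 / 5
  aa : B a a = 1 / 4
  bb : B b b = 1 / 4
  cc : B c c = 1 / 4
  ab : B a b = 13 / 2 ^ 10
  bc : B b c = 13 / 2 ^ 10
  ca : B c a = 13 / 2 ^ 10
  ua : B u a = 1 / 16
  ub : B u b = 1 / 16
  uc : B u c = 1 / 16

variable (K) in
def griessComplement (u a b c : V) : V := -(5 / 14 : K) • u + (16 / 21 : K) • (a + b + c)

theorem griessComplement_rotate (u a b c : V) :
    griessComplement K u b c a = griessComplement K u a b c := by
  unfold griessComplement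
  abel_nf

namespace IsGriess3A

variable {mul : V →ₗ[K] V →ₗ[K] V} {u a b c : V}

theorem rotate (h : IsGriess3A mul u a b c) : IsGriess3A mul u b c a :=
  ⟨h.comm, h.uu, h.bb, h.cc, h.aa, h.bc, h.ca, h.ab, h.ub, h.uc, h.ua⟩

variable [CharZero K]

theorem mul_griessComplement_self (h : IsGriess3A mul u a b c) :
    mul (griessComplement K u a b c) (griessComplement K u a b c) =
      (2 : K) • griessComplement K u a b c := by
  simp only [griessComplement, map_add, map_smul, LinearMap.add_apply, LinearMap.smul_apply,
    h.uu, h.aa, h.bb, h.cc, h.ab, h.bc, h.ca, h.ua, h.ub, h.uc, h.comm b a, h.comm c b,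
    h.comm a c, h.comm a u, h.comm b u, h.comm c u]
  module

theorem mul_griessComplement (h : IsGriess3A mul u a b c) :
    mul u (griessComplement K u a b c) = 0 := by
  simp only [griessComplement, map_add, map_smul, h.uu, h.ua, h.ub, h.uc]
  module

theorem mul_add_griessComplement_apply_u (h : IsGriess3A mul u a b c) :
    mul (u + griessComplement K u a b c) u = (2 : K) • u := by
  rw [map_add, LinearMap.add_apply, h.comm (griessComplement K u a b c), h.mul_griessComplement,
    h.uu, add_zero]

theorem mul_add_griessComplement_apply_a (h : IsGriess3A mul u a b c) :
    mul (u + griessComplement K u a b c) a = (2 : K) • a := by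
  simp only [griessComplement, map_add, map_smul, LinearMap.add_apply, LinearMap.smul_apply,
    h.aa, h.ua, h.comm b a, h.ab, h.ca]
  module

theorem mul_add_griessComplement_apply_of_mem_span (h : IsGriess3A mul u a b c) :
    ∀ w ∈ Submodule.span K ({u, a, b, c} : Set V),
      mul (u + griessComplement K u a b c) w = (2 : K) • w := by
  have hb := h.rotate.mul_add_griessComplement_apply_a
  have hc := h.rotate.rotate.mul_add_griessComplement_apply_a
  rw [griessComplement_rotate] at hb
  rw [griessComplement_rotate, griessComplement_rotate] at hc
  intro w hw
  refine LinearMap.eqOn_span (g := (2 : K) • LinearMap.id) ?_ hw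
  rintro x (rfl | rfl | rfl | rfl)
  exacts [h.mul_add_griessComplement_apply_u, h.mul_add_griessComplement_apply_a, hb, hc]

end IsGriess3A

namespace IsGriess3AForm

variable [CharZero K] {B : V →ₗ[K] V →ₗ[K] K} {u a b c : V}

theorem apply_griessComplement (h : IsGriess3AForm B u a b c) :
    B u (griessComplement K u a b c) = 0 := by
  simp only [griessComplement, map_add, map_smul, h.uu, h.ua, h.ub, h.uc, smul_eq_mul]
  ring

theorem apply_griessComplement_griessComplement (h : IsGriess3AForm B u a b c) :
    B (griessComplement K u a b c) (griessComplement K u a b c) = 3 / 7 := by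
  simp only [griessComplement, map_add, map_smul, LinearMap.add_apply, LinearMap.smul_apply,
    h.uu, h.aa, h.bb, h.cc, h.ab, h.bc, h.ca, h.ua, h.ub, h.uc, h.symm b a, h.symm c b,
    h.symm a c, h.symm a u, h.symm b u, h.symm c u, smul_eq_mul]
  ring

end IsGriess3AForm

end

/-- In the Griess algebra of the dihedral 3A-algebra (with its
characteristic `c = 4/5` Virasoro vector `u` and Ising vectors `a`, `b`, `c`),
the vector `v = -(5/14)u + (16/21)(a+b+c)` satisfies `v·v = 2v`, `u·v = 0`,
`(u|v) = 0`, `(v|v) = 3/7`, and `u + v` acts as twice the identity on the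
linear span of `{u, a, b, c}`. -/
theorem stmt_0 (V : Type*) [AddCommGroup V] [Module ℝ V]
    (mul : V →ₗ[ℝ] V →ₗ[ℝ] V)
    (hcomm : ∀ s t : V, mul s t = mul t s)
    (B : V →ₗ[ℝ] V →ₗ[ℝ] ℝ)
    (hsymm : ∀ s t : V, B s t = B t s)
    (u a b c : V)
    (huu : mul u u = (2 : ℝ) • u)
    (haa : mul a a = (2 : ℝ) • a)
    (hbb : mul b b = (2 : ℝ) • b)
    (hcc : mul c c = (2 : ℝ) • c)
    (hab : mul a b = -(135 / 2 ^ 10 : ℝ) • u + (1 / 8 : ℝ) • (a + b) + (1 / 16 : ℝ) • c)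
    (hbc : mul b c = -(135 / 2 ^ 10 : ℝ) • u + (1 / 8 : ℝ) • (b + c) + (1 / 16 : ℝ) • a)
    (hca : mul c a = -(135 / 2 ^ 10 : ℝ) • u + (1 / 8 : ℝ) • (c + a) + (1 / 16 : ℝ) • b)
    (hua : mul u a = (5 / 16 : ℝ) • u + (4 / 9 : ℝ) • a - (2 / 9 : ℝ) • (b + c))
    (hub : mul u b = (5 / 16 : ℝ) • u + (4 / 9 : ℝ) • b - (2 / 9 : ℝ) • (c + a))
    (huc : mul u c = (5 / 16 : ℝ) • u + (4 / 9 : ℝ) • c - (2 / 9 : ℝ) • (a + b))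
    (hBuu : B u u = 2 / 5)
    (hBaa : B a a = 1 / 4) (hBbb : B b b = 1 / 4) (hBcc : B c c = 1 / 4)
    (hBab : B a b = 13 / 2 ^ 10) (hBbc : B b c = 13 / 2 ^ 10) (hBca : B c a = 13 / 2 ^ 10)
    (hBua : B u a = 1 / 16) (hBub : B u b = 1 / 16) (hBuc : B u c = 1 / 16) :
    ∀ v : V, v = -(5 / 14 : ℝ) • u + (16 / 21 : ℝ) • (a + b + c) →
      mul v v = (2 : ℝ) • v ∧
      mul u v = 0 ∧
      B u v = 0 ∧
      B v v = 3 / 7 ∧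
      ∀ w ∈ Submodule.span ℝ ({u, a, b, c} : Set V), mul (u + v) w = (2 : ℝ) • w := by
  have hmul : IsGriess3A mul u a b c :=
    ⟨hcomm, huu, haa, hbb, hcc, hab, hbc, hca, hua, hub, huc⟩
  have hB : IsGriess3AForm B u a b c :=
    ⟨hsymm, hBuu, hBaa, hBbb, hBcc, hBab, hBbc, hBca, hBua, hBub, hBuc⟩
  rintro v rfl
  exact ⟨hmul.mul_griessComplement_self, hmul.mul_griessComplement, hB.apply_griessComplement,
    hB.apply_griessComplement_griessComplement, hmul.mul_add_griessComplement_apply_of_mem_span⟩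
end

section
/- Suppose u, a, b, c satisfy the 3A Griess relations. For a τ_a-fixed vector w, the σ-involution of the Ising vector a is given on the Griess algebra by the formula σ_a(w) = w + 32(a|w)a − 4a·w. With this formula one has the two identities: u + 32(a|u)a − 4a·u = −(1/4)u + (2/9)a + (8/9)(b + c), and (b + c) + 32(a|b + c)a − 4a·(b + c) = (135/2^7)u − (3/16)a + (1/4)(b + c). -/
theorem stmt_1_general (V : Type*) [AddCommGroup V] [Module ℝ V]
    (mul : V →ₗ[ℝ] V →ₗ[ℝ] V)
    (hcomm : ∀ s t : V, mul s t = mul t s)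
    (B : V →ₗ[ℝ] V →ₗ[ℝ] ℝ)
    (hsymm : ∀ s t : V, B s t = B t s)
    (u a b c : V)
    (hab : mul a b = -(135 / 2 ^ 10 : ℝ) • u + (1 / 8 : ℝ) • (a + b) + (1 / 16 : ℝ) • c)
    (hca : mul c a = -(135 / 2 ^ 10 : ℝ) • u + (1 / 8 : ℝ) • (c + a) + (1 / 16 : ℝ) • b)
    (hua : mul u a = (5 / 16 : ℝ) • u + (4 / 9 : ℝ) • a - (2 / 9 : ℝ) • (b + c))
    (hBab : B a b = 13 / 2 ^ 10) (hBca : B c a = 13 / 2 ^ 10)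
    (hBua : B u a = 1 / 16) :
    u + (32 * B a u) • a - (4 : ℝ) • mul a u
        = -(1 / 4 : ℝ) • u + (2 / 9 : ℝ) • a + (8 / 9 : ℝ) • (b + c) ∧
    (b + c) + (32 * B a (b + c)) • a - (4 : ℝ) • mul a (b + c)
        = (135 / 2 ^ 7 : ℝ) • u - (3 / 16 : ℝ) • a + (1 / 4 : ℝ) • (b + c) := by
  constructor
  · rw [hcomm a u, hua, hsymm a u, hBua]
    module
  · rw [map_add, map_add, hab, hcomm a c, hca, hBab, hsymm a c, hBca]
    module

/-- In the Griess algebra of the dihedral 3A-algebra, the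
σ-involution formula `σ_a(w) = w + 32(a|w)a - 4a·w` yields
`σ_a(u) = -(1/4)u + (2/9)a + (8/9)(b+c)` and
`σ_a(b+c) = (135/2^7)u - (3/16)a + (1/4)(b+c)`. -/
theorem stmt_1 (V : Type*) [AddCommGroup V] [Module ℝ V]
    (mul : V →ₗ[ℝ] V →ₗ[ℝ] V)
    (hcomm : ∀ s t : V, mul s t = mul t s)
    (B : V →ₗ[ℝ] V →ₗ[ℝ] ℝ)
    (hsymm : ∀ s t : V, B s t = B t s)
    (u a b c : V)
    (huu : mul u u = (2 : ℝ) • u)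
    (haa : mul a a = (2 : ℝ) • a)
    (hbb : mul b b = (2 : ℝ) • b)
    (hcc : mul c c = (2 : ℝ) • c)
    (hab : mul a b = -(135 / 2 ^ 10 : ℝ) • u + (1 / 8 : ℝ) • (a + b) + (1 / 16 : ℝ) • c)
    (hbc : mul b c = -(135 / 2 ^ 10 : ℝ) • u + (1 / 8 : ℝ) • (b + c) + (1 / 16 : ℝ) • a)
    (hca : mul c a = -(135 / 2 ^ 10 : ℝ) • u + (1 / 8 : ℝ) • (c + a) + (1 / 16 : ℝ) • b)
    (hua : mul u a = (5 / 16 : ℝ) • u + (4 / 9 : ℝ) • a - (2 / 9 : ℝ) • (b + c))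
    (hub : mul u b = (5 / 16 : ℝ) • u + (4 / 9 : ℝ) • b - (2 / 9 : ℝ) • (c + a))
    (huc : mul u c = (5 / 16 : ℝ) • u + (4 / 9 : ℝ) • c - (2 / 9 : ℝ) • (a + b))
    (hBuu : B u u = 2 / 5)
    (hBaa : B a a = 1 / 4) (hBbb : B b b = 1 / 4) (hBcc : B c c = 1 / 4)
    (hBab : B a b = 13 / 2 ^ 10) (hBbc : B b c = 13 / 2 ^ 10) (hBca : B c a = 13 / 2 ^ 10)
    (hBua : B u a = 1 / 16) (hBub : B u b = 1 / 16) (hBuc : B u c = 1 / 16) :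
    u + (32 * B a u) • a - (4 : ℝ) • mul a u
        = -(1 / 4 : ℝ) • u + (2 / 9 : ℝ) • a + (8 / 9 : ℝ) • (b + c) ∧
    (b + c) + (32 * B a (b + c)) • a - (4 : ℝ) • mul a (b + c)
        = (135 / 2 ^ 7 : ℝ) • u - (3 / 16 : ℝ) • a + (1 / 4 : ℝ) • (b + c) :=
  stmt_1_general V mul hcomm B hsymm u a b c hab hca hua hBab hBca hBua
end

section
/- Suppose u, x, e_0, …, e_5 satisfy the 6A Griess relations. Then e_0·(e_2·x) = −(45/2^10)u + (1/2^7)(7x + 11e_0 + e_1 + 5e_2 − 7e_3 + 3e_4 − e_5). (In the paper's labels a = e_0, b = e_2, c = e_4, a∘x = e_3, b∘x = e_5, c∘x = e_1, this is the identity a·(b·x) = −(45/2^10)u + (1/2^7)(7x + 11a + 5b + 3c − 7a∘x − b∘x + c∘x) of Lemma 2.14.) -/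
theorem stmt_2_general (V : Type*) [AddCommGroup V] [Module ℝ V]
    (mul : V →ₗ[ℝ] V →ₗ[ℝ] V)
    (hcomm : ∀ s t : V, mul s t = mul t s)
    (u x : V) (e : ZMod 6 → V)
    (hxe : ∀ i : ZMod 6, mul x (e i) = (1 / 4 : ℝ) • (x + e i - e (i + 3)))
    (he1 : ∀ i : ZMod 6, mul (e i) (e (i + 1))
        = (45 / 2 ^ 10 : ℝ) • u + (1 / 2 ^ 5 : ℝ) •
            (x + e i + e (i + 1) - e (i + 2) - e (i + 3) - e (i + 4) - e (i + 5)))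
    (he2 : ∀ i : ZMod 6, mul (e i) (e (i + 2))
        = -(135 / 2 ^ 10 : ℝ) • u + (1 / 8 : ℝ) • (e i + e (i + 2)) + (1 / 16 : ℝ) • e (i + 4)) :
    mul (e 0) (mul (e 2) x)
      = -(45 / 2 ^ 10 : ℝ) • u + (1 / 2 ^ 7 : ℝ) •
          ((7 : ℝ) • x + (11 : ℝ) • e 0 + e 1 + (5 : ℝ) • e 2
            - (7 : ℝ) • e 3 + (3 : ℝ) • e 4 - e 5) := by
  have h2x := (hcomm (e 2) x).trans (hxe 2)
  have h0x := (hcomm (e 0) x).trans (hxe 0)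
  have h02 := he2 0
  have h50 := he1 5
  reduce_mod_char at h2x h0x h02 h50
  rw [h2x, map_smul, map_add, map_add, map_neg, h0x, h02, hcomm (e 0) (e 5), h50]
  module

/-- In the Griess algebra of the dihedral 6A-algebra (central
Ising vector `x`, characteristic `c = 4/5` Virasoro vector `u`, Ising vectors
`e 0, …, e 5` indexed mod 6), one has the first identity of Lemma 2.14:
`e_0·(e_2·x) = -(45/2^10)u + (1/2^7)(7x + 11e_0 + e_1 + 5e_2 - 7e_3 + 3e_4 - e_5)`. -/
theorem stmt_2 (V : Type*) [AddCommGroup V] [Module ℝ V]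
    (mul : V →ₗ[ℝ] V →ₗ[ℝ] V)
    (hcomm : ∀ s t : V, mul s t = mul t s)
    (B : V →ₗ[ℝ] V →ₗ[ℝ] ℝ)
    (hsymm : ∀ s t : V, B s t = B t s)
    (u x : V) (e : ZMod 6 → V)
    (huu : mul u u = (2 : ℝ) • u)
    (hxx : mul x x = (2 : ℝ) • x)
    (hee : ∀ i : ZMod 6, mul (e i) (e i) = (2 : ℝ) • e i)
    (hux : mul u x = 0)
    (hue : ∀ i : ZMod 6, mul u (e i)
        = (5 / 16 : ℝ) • u + (4 / 9 : ℝ) • e i - (2 / 9 : ℝ) • (e (i + 2) + e (i + 4)))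
    (hxe : ∀ i : ZMod 6, mul x (e i) = (1 / 4 : ℝ) • (x + e i - e (i + 3)))
    (he1 : ∀ i : ZMod 6, mul (e i) (e (i + 1))
        = (45 / 2 ^ 10 : ℝ) • u + (1 / 2 ^ 5 : ℝ) •
            (x + e i + e (i + 1) - e (i + 2) - e (i + 3) - e (i + 4) - e (i + 5)))
    (he2 : ∀ i : ZMod 6, mul (e i) (e (i + 2))
        = -(135 / 2 ^ 10 : ℝ) • u + (1 / 8 : ℝ) • (e i + e (i + 2)) + (1 / 16 : ℝ) • e (i + 4))
    (he3 : ∀ i : ZMod 6, mul (e i) (e (i + 3)) = (1 / 4 : ℝ) • (e i + e (i + 3) - x))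
    (hBuu : B u u = 2 / 5)
    (hBxx : B x x = 1 / 4)
    (hBee : ∀ i : ZMod 6, B (e i) (e i) = 1 / 4)
    (hBux : B u x = 0)
    (hBue : ∀ i : ZMod 6, B u (e i) = 1 / 16)
    (hBxe : ∀ i : ZMod 6, B x (e i) = 1 / 32)
    (hBe1 : ∀ i : ZMod 6, B (e i) (e (i + 1)) = 5 / 2 ^ 10)
    (hBe2 : ∀ i : ZMod 6, B (e i) (e (i + 2)) = 13 / 2 ^ 10)
    (hBe3 : ∀ i : ZMod 6, B (e i) (e (i + 3)) = 1 / 32) :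
    mul (e 0) (mul (e 2) x)
      = -(45 / 2 ^ 10 : ℝ) • u + (1 / 2 ^ 7 : ℝ) •
          ((7 : ℝ) • x + (11 : ℝ) • e 0 + e 1 + (5 : ℝ) • e 2
            - (7 : ℝ) • e 3 + (3 : ℝ) • e 4 - e 5) :=
  stmt_2_general V mul hcomm u x e hxe he1 he2
end

section
/- Suppose u, x, e_0, …, e_5 satisfy the 6A Griess relations. Set f = −(15/56)u + (1/2)x − (2/21)(e_0 + e_2 + e_4) + (2/3)(e_1 + e_3 + e_5). Then f·f = 2f and (f|f) = 25/56 (so f is a Virasoro-type idempotent of central charge 2(f|f) = 25/28), and f annihilates and is orthogonal to the Griess algebra of the 3A-subalgebra spanned by u, e_0, e_2, e_4: f·u = 0, f·e_0 = f·e_2 = f·e_4 = 0, (f|u) = 0, and (f|e_0) = (f|e_2) = (f|e_4) = 0. (This is the c = 25/28 Virasoro vector of Theorem 2.13(8) generating the commutant of the 3A-subalgebra of the 6A-algebra.) -/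
/-! The vector `f` is fixed by the rotation `i ↦ i + 2` and lies in the span of `u`, `x` and the
two 3A-triple sums `T₀ = e₀ + e₂ + e₄`, `T₁ = e₁ + e₃ + e₅`, a subalgebra with a small
multiplication table. A direct computation gives `f·u = f·e₀ = 0`; rotation invariance then gives
`f·e₂ = f·e₄ = 0`, so `f·T₀ = 0` and `f·f = f·(x/2 + 2T₁/3)` is read off the table. The form is
handled the same way. -/

structure IsGriess6A {V : Type*} [AddCommGroup V] [Module ℝ V]
    (mul : V →ₗ[ℝ] V →ₗ[ℝ] V) (B : V →ₗ[ℝ] V →ₗ[ℝ] ℝ) (u x : V) (e : ZMod 6 → V) : Prop where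
  mul_comm : ∀ s t : V, mul s t = mul t s
  form_comm : ∀ s t : V, B s t = B t s
  mul_u_u : mul u u = (2 : ℝ) • u
  mul_x_x : mul x x = (2 : ℝ) • x
  mul_e_e : ∀ i, mul (e i) (e i) = (2 : ℝ) • e i
  mul_u_x : mul u x = 0
  mul_u_e : ∀ i, mul u (e i)
    = (5 / 16 : ℝ) • u + (4 / 9 : ℝ) • e i - (2 / 9 : ℝ) • (e (i + 2) + e (i + 4))
  mul_x_e : ∀ i, mul x (e i) = (1 / 4 : ℝ) • (x + e i - e (i + 3))
  mul_e_add_one : ∀ i, mul (e i) (e (i + 1))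
    = (45 / 2 ^ 10 : ℝ) • u + (1 / 2 ^ 5 : ℝ) •
        (x + e i + e (i + 1) - e (i + 2) - e (i + 3) - e (i + 4) - e (i + 5))
  mul_e_add_two : ∀ i, mul (e i) (e (i + 2))
    = -(135 / 2 ^ 10 : ℝ) • u + (1 / 8 : ℝ) • (e i + e (i + 2)) + (1 / 16 : ℝ) • e (i + 4)
  mul_e_add_three : ∀ i, mul (e i) (e (i + 3)) = (1 / 4 : ℝ) • (e i + e (i + 3) - x)
  form_u_u : B u u = 2 / 5
  form_x_x : B x x = 1 / 4
  form_e_e : ∀ i, B (e i) (e i) = 1 / 4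
  form_u_x : B u x = 0
  form_u_e : ∀ i, B u (e i) = 1 / 16
  form_x_e : ∀ i, B x (e i) = 1 / 32
  form_e_add_one : ∀ i, B (e i) (e (i + 1)) = 5 / 2 ^ 10
  form_e_add_two : ∀ i, B (e i) (e (i + 2)) = 13 / 2 ^ 10
  form_e_add_three : ∀ i, B (e i) (e (i + 3)) = 1 / 32

section

variable {V : Type*} [AddCommMonoid V]

def threeATriple (e : ZMod 6 → V) (i : ZMod 6) : V := e i + e (i + 2) + e (i + 4)

theorem threeATriple_add_two (e : ZMod 6 → V) (i : ZMod 6) :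
    threeATriple e (i + 2) = threeATriple e i := by
  simp only [threeATriple, show i + 2 + 2 = i + 4 by grind, show i + 2 + 4 = i by grind]
  abel

theorem threeATriple_add_four (e : ZMod 6 → V) (i : ZMod 6) :
    threeATriple e (i + 4) = threeATriple e i := by
  rw [show i + 4 = i + 2 + 2 by grind, threeATriple_add_two, threeATriple_add_two]

theorem map_threeATriple {W F : Type*} [Add W] [FunLike F V W] [AddHomClass F V W]
    (φ : F) (e : ZMod 6 → V) (i : ZMod 6) :
    φ (threeATriple e i) = φ (e i) + φ (e (i + 2)) + φ (e (i + 4)) := by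
  simp only [threeATriple, map_add]

end

section

variable {V : Type*} [AddCommGroup V] [Module ℝ V]

/-- The vector `f` of the theorem is `commutantVirasoro u x e 0`. -/
noncomputable def commutantVirasoro (u x : V) (e : ZMod 6 → V) (i : ZMod 6) : V :=
  -(15 / 56 : ℝ) • u + (1 / 2 : ℝ) • x - (2 / 21 : ℝ) • threeATriple e i
    + (2 / 3 : ℝ) • threeATriple e (i + 1)

theorem commutantVirasoro_add_two (u x : V) (e : ZMod 6 → V) (i : ZMod 6) :
    commutantVirasoro u x e (i + 2) = commutantVirasoro u x e i := by
  rw [commutantVirasoro, commutantVirasoro, add_right_comm, threeATriple_add_two,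
    threeATriple_add_two]

theorem commutantVirasoro_add_four (u x : V) (e : ZMod 6 → V) (i : ZMod 6) :
    commutantVirasoro u x e (i + 4) = commutantVirasoro u x e i := by
  rw [show i + 4 = i + 2 + 2 by grind, commutantVirasoro_add_two, commutantVirasoro_add_two]

end

namespace IsGriess6A

variable {V : Type*} [AddCommGroup V] [Module ℝ V] {mul : V →ₗ[ℝ] V →ₗ[ℝ] V}
  {B : V →ₗ[ℝ] V →ₗ[ℝ] ℝ} {u x : V} {e : ZMod 6 → V}

theorem mul_e_add_four (h : IsGriess6A mul B u x e) (i : ZMod 6) : mul (e i) (e (i + 4))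
    = -(135 / 2 ^ 10 : ℝ) • u + (1 / 8 : ℝ) • (e i + e (i + 4)) + (1 / 16 : ℝ) • e (i + 2) := by
  have h4 := h.mul_e_add_two (i + 4)
  rw [show i + 4 + 2 = i by grind, show i + 4 + 4 = i + 2 by grind] at h4
  rw [h.mul_comm, h4]
  module

theorem mul_e_add_five (h : IsGriess6A mul B u x e) (i : ZMod 6) : mul (e i) (e (i + 5))
    = (45 / 2 ^ 10 : ℝ) • u + (1 / 2 ^ 5 : ℝ) •
        (x + e i + e (i + 5) - e (i + 1) - e (i + 2) - e (i + 3) - e (i + 4)) := by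
  have h5 := h.mul_e_add_one (i + 5)
  rw [show i + 5 + 1 = i by grind, show i + 5 + 2 = i + 1 by grind,
    show i + 5 + 3 = i + 2 by grind, show i + 5 + 4 = i + 3 by grind,
    show i + 5 + 5 = i + 4 by grind] at h5
  rw [h.mul_comm, h5]
  module

theorem form_e_add_four (h : IsGriess6A mul B u x e) (i : ZMod 6) :
    B (e i) (e (i + 4)) = 13 / 2 ^ 10 := by
  rw [h.form_comm, ← h.form_e_add_two (i + 4), show i + 4 + 2 = i by grind]

theorem form_e_add_five (h : IsGriess6A mul B u x e) (i : ZMod 6) :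
    B (e i) (e (i + 5)) = 5 / 2 ^ 10 := by
  rw [h.form_comm, ← h.form_e_add_one (i + 5), show i + 5 + 1 = i by grind]

theorem mul_u_e_eq (h : IsGriess6A mul B u x e) (i : ZMod 6) :
    mul u (e i) = (5 / 16 : ℝ) • u + (2 / 3 : ℝ) • e i - (2 / 9 : ℝ) • threeATriple e i := by
  rw [h.mul_u_e, threeATriple]
  module

theorem mul_u_threeATriple (h : IsGriess6A mul B u x e) (i : ZMod 6) :
    mul u (threeATriple e i) = (15 / 16 : ℝ) • u := by
  rw [map_threeATriple (mul u), h.mul_u_e_eq, h.mul_u_e_eq, h.mul_u_e_eq, threeATriple_add_two,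
    threeATriple_add_four, threeATriple]
  module

theorem mul_x_threeATriple (h : IsGriess6A mul B u x e) (i : ZMod 6) :
    mul x (threeATriple e i)
      = (1 / 4 : ℝ) • ((3 : ℝ) • x + threeATriple e i - threeATriple e (i + 1)) := by
  simp only [threeATriple, map_add, h.mul_x_e, show i + 2 + 3 = i + 5 by grind,
    show i + 4 + 3 = i + 1 by grind, show i + 1 + 2 = i + 3 by grind,
    show i + 1 + 4 = i + 5 by grind]
  module

theorem mul_e_threeATriple (h : IsGriess6A mul B u x e) (i : ZMod 6) :
    mul (e i) (threeATriple e i)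
      = -(135 / 2 ^ 9 : ℝ) • u + (33 / 16 : ℝ) • e i + (3 / 16 : ℝ) • threeATriple e i := by
  rw [map_threeATriple (mul (e i)), h.mul_e_e, h.mul_e_add_two, h.mul_e_add_four, threeATriple]
  module

theorem mul_e_threeATriple_add_one (h : IsGriess6A mul B u x e) (i : ZMod 6) :
    mul (e i) (threeATriple e (i + 1))
      = (45 / 2 ^ 9 : ℝ) • u - (3 / 16 : ℝ) • x + (3 / 8 : ℝ) • e i
        - (1 / 16 : ℝ) • threeATriple e i + (3 / 16 : ℝ) • e (i + 3) := by
  rw [map_threeATriple (mul (e i)), show i + 1 + 2 = i + 3 by grind,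
    show i + 1 + 4 = i + 5 by grind, h.mul_e_add_one, h.mul_e_add_three, h.mul_e_add_five,
    threeATriple]
  module

theorem mul_threeATriple_self (h : IsGriess6A mul B u x e) (i : ZMod 6) :
    mul (threeATriple e i) (threeATriple e i)
      = -(405 / 2 ^ 9 : ℝ) • u + (21 / 8 : ℝ) • threeATriple e i := by
  have h2 := h.mul_e_threeATriple (i + 2)
  have h4 := h.mul_e_threeATriple (i + 4)
  rw [threeATriple_add_two] at h2
  rw [threeATriple_add_four] at h4
  rw [map_threeATriple mul, LinearMap.add_apply, LinearMap.add_apply, h.mul_e_threeATriple, h2,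
    h4, threeATriple]
  module

theorem mul_threeATriple_threeATriple_add_one (h : IsGriess6A mul B u x e) (i : ZMod 6) :
    mul (threeATriple e i) (threeATriple e (i + 1))
      = (135 / 2 ^ 9 : ℝ) • u - (9 / 16 : ℝ) • x
        + (3 / 16 : ℝ) • (threeATriple e i + threeATriple e (i + 1)) := by
  have h2 := h.mul_e_threeATriple_add_one (i + 2)
  have h4 := h.mul_e_threeATriple_add_one (i + 4)
  rw [show i + 2 + 1 = i + 1 + 2 by grind, threeATriple_add_two, threeATriple_add_two] at h2
  rw [show i + 4 + 1 = i + 1 + 4 by grind, threeATriple_add_four, threeATriple_add_four] at h4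
  rw [map_threeATriple mul, LinearMap.add_apply, LinearMap.add_apply,
    h.mul_e_threeATriple_add_one, h2, h4, threeATriple, threeATriple,
    show i + 2 + 3 = i + 1 + 4 by grind, show i + 4 + 3 = i + 1 by grind,
    show i + 3 = i + 1 + 2 by grind]
  module

theorem form_u_threeATriple (h : IsGriess6A mul B u x e) (i : ZMod 6) :
    B u (threeATriple e i) = 3 / 16 := by
  rw [map_threeATriple (B u), h.form_u_e, h.form_u_e, h.form_u_e]
  norm_num

theorem form_x_threeATriple (h : IsGriess6A mul B u x e) (i : ZMod 6) :
    B x (threeATriple e i) = 3 / 32 := by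
  rw [map_threeATriple (B x), h.form_x_e, h.form_x_e, h.form_x_e]
  norm_num

theorem form_e_threeATriple (h : IsGriess6A mul B u x e) (i : ZMod 6) :
    B (e i) (threeATriple e i) = 141 / 2 ^ 9 := by
  rw [map_threeATriple (B (e i)), h.form_e_e, h.form_e_add_two, h.form_e_add_four]
  norm_num

theorem form_e_threeATriple_add_one (h : IsGriess6A mul B u x e) (i : ZMod 6) :
    B (e i) (threeATriple e (i + 1)) = 21 / 2 ^ 9 := by
  rw [map_threeATriple (B (e i)), show i + 1 + 2 = i + 3 by grind,
    show i + 1 + 4 = i + 5 by grind, h.form_e_add_one, h.form_e_add_three, h.form_e_add_five]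
  norm_num

theorem form_threeATriple_self (h : IsGriess6A mul B u x e) (i : ZMod 6) :
    B (threeATriple e i) (threeATriple e i) = 423 / 2 ^ 9 := by
  have h2 := h.form_e_threeATriple (i + 2)
  have h4 := h.form_e_threeATriple (i + 4)
  rw [threeATriple_add_two] at h2
  rw [threeATriple_add_four] at h4
  rw [map_threeATriple B, LinearMap.add_apply, LinearMap.add_apply, h.form_e_threeATriple, h2, h4]
  norm_num

theorem form_threeATriple_threeATriple_add_one (h : IsGriess6A mul B u x e) (i : ZMod 6) :
    B (threeATriple e i) (threeATriple e (i + 1)) = 63 / 2 ^ 9 := by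
  have h2 := h.form_e_threeATriple_add_one (i + 2)
  have h4 := h.form_e_threeATriple_add_one (i + 4)
  rw [show i + 2 + 1 = i + 1 + 2 by grind, threeATriple_add_two] at h2
  rw [show i + 4 + 1 = i + 1 + 4 by grind, threeATriple_add_four] at h4
  rw [map_threeATriple B, LinearMap.add_apply, LinearMap.add_apply,
    h.form_e_threeATriple_add_one, h2, h4]
  norm_num

theorem mul_commutantVirasoro_u (h : IsGriess6A mul B u x e) (i : ZMod 6) :
    mul (commutantVirasoro u x e i) u = 0 := by
  rw [h.mul_comm, commutantVirasoro]
  simp only [map_add, map_sub, map_smul, h.mul_u_u, h.mul_u_x, h.mul_u_threeATriple]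
  module

theorem mul_commutantVirasoro_e (h : IsGriess6A mul B u x e) (i : ZMod 6) :
    mul (commutantVirasoro u x e i) (e i) = 0 := by
  rw [h.mul_comm, commutantVirasoro]
  simp only [map_add, map_sub, map_smul, h.mul_comm (e i) u, h.mul_u_e_eq, h.mul_comm (e i) x,
    h.mul_x_e, h.mul_e_threeATriple, h.mul_e_threeATriple_add_one]
  rw [threeATriple]
  module

theorem mul_commutantVirasoro_threeATriple (h : IsGriess6A mul B u x e) (i : ZMod 6) :
    mul (commutantVirasoro u x e i) (threeATriple e i) = 0 := by
  have h2 := h.mul_commutantVirasoro_e (i + 2)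
  have h4 := h.mul_commutantVirasoro_e (i + 4)
  rw [commutantVirasoro_add_two] at h2
  rw [commutantVirasoro_add_four] at h4
  rw [map_threeATriple, h.mul_commutantVirasoro_e, h2, h4, add_zero, add_zero]

theorem mul_commutantVirasoro_self (h : IsGriess6A mul B u x e) (i : ZMod 6) :
    mul (commutantVirasoro u x e i) (commutantVirasoro u x e i)
      = (2 : ℝ) • commutantVirasoro u x e i := by
  have hf : mul (commutantVirasoro u x e i) (commutantVirasoro u x e i)
      = (1 / 2 : ℝ) • mul x (commutantVirasoro u x e i)
        + (2 / 3 : ℝ) • mul (threeATriple e (i + 1)) (commutantVirasoro u x e i) := by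
    nth_rewrite 2 [commutantVirasoro]
    simp only [map_add, map_sub, map_smul, h.mul_commutantVirasoro_u,
      h.mul_commutantVirasoro_threeATriple, h.mul_comm _ x, h.mul_comm _ (threeATriple e (i + 1))]
    module
  rw [hf]
  simp only [commutantVirasoro, map_add, map_sub, map_smul, h.mul_comm x u, h.mul_u_x, h.mul_x_x,
    h.mul_x_threeATriple, h.mul_comm (threeATriple e (i + 1)) u, h.mul_u_threeATriple,
    h.mul_comm (threeATriple e (i + 1)) x, h.mul_comm (threeATriple e (i + 1)) (threeATriple e i),
    h.mul_threeATriple_threeATriple_add_one, h.mul_threeATriple_self,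
    show i + 1 + 1 = i + 2 by grind, threeATriple_add_two]
  module

theorem form_commutantVirasoro_u (h : IsGriess6A mul B u x e) (i : ZMod 6) :
    B (commutantVirasoro u x e i) u = 0 := by
  rw [h.form_comm, commutantVirasoro]
  simp only [map_add, map_sub, map_smul, h.form_u_u, h.form_u_x, h.form_u_threeATriple]
  norm_num

theorem form_commutantVirasoro_e (h : IsGriess6A mul B u x e) (i : ZMod 6) :
    B (commutantVirasoro u x e i) (e i) = 0 := by
  rw [h.form_comm, commutantVirasoro]
  simp only [map_add, map_sub, map_smul, h.form_comm (e i) u, h.form_u_e, h.form_comm (e i) x,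
    h.form_x_e, h.form_e_threeATriple, h.form_e_threeATriple_add_one, smul_eq_mul]
  norm_num

theorem form_commutantVirasoro_threeATriple (h : IsGriess6A mul B u x e) (i : ZMod 6) :
    B (commutantVirasoro u x e i) (threeATriple e i) = 0 := by
  have h2 := h.form_commutantVirasoro_e (i + 2)
  have h4 := h.form_commutantVirasoro_e (i + 4)
  rw [commutantVirasoro_add_two] at h2
  rw [commutantVirasoro_add_four] at h4
  rw [map_threeATriple, h.form_commutantVirasoro_e, h2, h4, add_zero, add_zero]

theorem form_commutantVirasoro_self (h : IsGriess6A mul B u x e) (i : ZMod 6) :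
    B (commutantVirasoro u x e i) (commutantVirasoro u x e i) = 25 / 56 := by
  have hf : B (commutantVirasoro u x e i) (commutantVirasoro u x e i)
      = 1 / 2 * B x (commutantVirasoro u x e i)
        + 2 / 3 * B (threeATriple e (i + 1)) (commutantVirasoro u x e i) := by
    nth_rewrite 2 [commutantVirasoro]
    simp only [map_add, map_sub, map_smul, h.form_commutantVirasoro_u,
      h.form_commutantVirasoro_threeATriple, h.form_comm _ x,
      h.form_comm _ (threeATriple e (i + 1)), smul_eq_mul]
    ring
  rw [hf]
  simp only [commutantVirasoro, map_add, map_sub, map_smul, h.form_comm x u, h.form_u_x,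
    h.form_x_x, h.form_x_threeATriple, h.form_comm (threeATriple e (i + 1)) u,
    h.form_u_threeATriple, h.form_comm (threeATriple e (i + 1)) x,
    h.form_comm (threeATriple e (i + 1)) (threeATriple e i),
    h.form_threeATriple_threeATriple_add_one, h.form_threeATriple_self, smul_eq_mul]
  norm_num

end IsGriess6A

/-- In the Griess algebra of the dihedral 6A-algebra, the vector
`f = -(15/56)u + (1/2)x - (2/21)(e_0+e_2+e_4) + (2/3)(e_1+e_3+e_5)` is an
idempotent (`f·f = 2f`) with `(f|f) = 25/56` (central charge `25/28`), and it
annihilates and is orthogonal to the 3A-subalgebra spanned by `u, e_0, e_2, e_4`.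
(Theorem 2.13(8).) -/
theorem stmt_4 (V : Type*) [AddCommGroup V] [Module ℝ V]
    (mul : V →ₗ[ℝ] V →ₗ[ℝ] V)
    (hcomm : ∀ s t : V, mul s t = mul t s)
    (B : V →ₗ[ℝ] V →ₗ[ℝ] ℝ)
    (hsymm : ∀ s t : V, B s t = B t s)
    (u x : V) (e : ZMod 6 → V)
    (huu : mul u u = (2 : ℝ) • u)
    (hxx : mul x x = (2 : ℝ) • x)
    (hee : ∀ i : ZMod 6, mul (e i) (e i) = (2 : ℝ) • e i)
    (hux : mul u x = 0)
    (hue : ∀ i : ZMod 6, mul u (e i)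
        = (5 / 16 : ℝ) • u + (4 / 9 : ℝ) • e i - (2 / 9 : ℝ) • (e (i + 2) + e (i + 4)))
    (hxe : ∀ i : ZMod 6, mul x (e i) = (1 / 4 : ℝ) • (x + e i - e (i + 3)))
    (he1 : ∀ i : ZMod 6, mul (e i) (e (i + 1))
        = (45 / 2 ^ 10 : ℝ) • u + (1 / 2 ^ 5 : ℝ) •
            (x + e i + e (i + 1) - e (i + 2) - e (i + 3) - e (i + 4) - e (i + 5)))
    (he2 : ∀ i : ZMod 6, mul (e i) (e (i + 2))
        = -(135 / 2 ^ 10 : ℝ) • u + (1 / 8 : ℝ) • (e i + e (i + 2)) + (1 / 16 : ℝ) • e (i + 4))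
    (he3 : ∀ i : ZMod 6, mul (e i) (e (i + 3)) = (1 / 4 : ℝ) • (e i + e (i + 3) - x))
    (hBuu : B u u = 2 / 5)
    (hBxx : B x x = 1 / 4)
    (hBee : ∀ i : ZMod 6, B (e i) (e i) = 1 / 4)
    (hBux : B u x = 0)
    (hBue : ∀ i : ZMod 6, B u (e i) = 1 / 16)
    (hBxe : ∀ i : ZMod 6, B x (e i) = 1 / 32)
    (hBe1 : ∀ i : ZMod 6, B (e i) (e (i + 1)) = 5 / 2 ^ 10)
    (hBe2 : ∀ i : ZMod 6, B (e i) (e (i + 2)) = 13 / 2 ^ 10)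
    (hBe3 : ∀ i : ZMod 6, B (e i) (e (i + 3)) = 1 / 32) :
    ∀ f : V, f = -(15 / 56 : ℝ) • u + (1 / 2 : ℝ) • x
        - (2 / 21 : ℝ) • (e 0 + e 2 + e 4) + (2 / 3 : ℝ) • (e 1 + e 3 + e 5) →
      mul f f = (2 : ℝ) • f ∧
      B f f = 25 / 56 ∧
      mul f u = 0 ∧ mul f (e 0) = 0 ∧ mul f (e 2) = 0 ∧ mul f (e 4) = 0 ∧
      B f u = 0 ∧ B f (e 0) = 0 ∧ B f (e 2) = 0 ∧ B f (e 4) = 0 := by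
  intro f hf
  have h : IsGriess6A mul B u x e := ⟨hcomm, hsymm, huu, hxx, hee, hux, hue, hxe, he1, he2, he3,
    hBuu, hBxx, hBee, hBux, hBue, hBxe, hBe1, hBe2, hBe3⟩
  have hf0 : f = commutantVirasoro u x e 0 := by
    rw [hf, commutantVirasoro, threeATriple, threeATriple]
    norm_num
  have hf2 : f = commutantVirasoro u x e 2 := by
    rw [hf0, ← commutantVirasoro_add_two, zero_add]
  have hf4 : f = commutantVirasoro u x e 4 := by
    rw [hf0, ← commutantVirasoro_add_four, zero_add]
  exact ⟨hf0 ▸ h.mul_commutantVirasoro_self 0, hf0 ▸ h.form_commutantVirasoro_self 0,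
    hf0 ▸ h.mul_commutantVirasoro_u 0, hf0 ▸ h.mul_commutantVirasoro_e 0,
    hf2 ▸ h.mul_commutantVirasoro_e 2, hf4 ▸ h.mul_commutantVirasoro_e 4,
    hf0 ▸ h.form_commutantVirasoro_u 0, hf0 ▸ h.form_commutantVirasoro_e 0,
    hf2 ▸ h.form_commutantVirasoro_e 2, hf4 ▸ h.form_commutantVirasoro_e 4⟩
end

section
/- Suppose u, x, e_0, …, e_5 satisfy the 6A Griess relations, and let w be a further element of V with (w|u) = 0 and (w|e_0) = (w|e_2) = (w|e_4) = 2^{-5}. Then (w | e_0·(e_2·x)) = 2^{-7}( 7(w|x) − 7(w|e_3) − (w|e_5) + (w|e_1) + 19·2^{-5} ). (In the paper's labels a = e_0, b = e_2, c = τ_a b = e_4, with y = x the central Ising vector and a∘y = e_3, b∘y = e_5, c∘y = e_1, this is Lemma 4.2: (w | a·(b·y)) = 2^{-7}(7(w|y) − 7(w|a∘y) − (w|b∘y) + (w|c∘y) + 19·2^{-5}).) -/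
/-!
Only three products of the Griess algebra enter: `e₂·x` is a combination of `x, e₂, e₅`, so
`e₀·(e₂·x)` is a combination of `e₀·x`, `e₀·e₂` (distance two) and `e₀·e₅` (distance one), all
given by the 6A relations. The `u`-components are then annihilated by `(w|u) = 0`, and the three
vectors of the 3A-triple `{e₀, e₂, e₄}` collect into `(11 + 5 + 3)·(w|e_i) = 19·2⁻⁵`.
-/

section SixA

variable {V : Type*} [AddCommGroup V] [Module ℝ V] {mul : V →ₗ[ℝ] V →ₗ[ℝ] V} {u x : V}
  {e : ZMod 6 → V}

theorem e0_mul_e2_mul_x (hcomm : ∀ s t : V, mul s t = mul t s)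
    (hxe : ∀ i : ZMod 6, mul x (e i) = (1 / 4 : ℝ) • (x + e i - e (i + 3)))
    (he1 : ∀ i : ZMod 6, mul (e i) (e (i + 1))
        = (45 / 2 ^ 10 : ℝ) • u + (1 / 2 ^ 5 : ℝ) •
            (x + e i + e (i + 1) - e (i + 2) - e (i + 3) - e (i + 4) - e (i + 5)))
    (he2 : ∀ i : ZMod 6, mul (e i) (e (i + 2))
        = -(135 / 2 ^ 10 : ℝ) • u + (1 / 8 : ℝ) • (e i + e (i + 2)) + (1 / 16 : ℝ) • e (i + 4)) :
    mul (e 0) (mul (e 2) x)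
      = (1 / 2 ^ 7 : ℝ) • ((7 : ℝ) • x + (11 : ℝ) • e 0 + (5 : ℝ) • e 2 + (3 : ℝ) • e 4
          - (7 : ℝ) • e 3 - e 5 + e 1) - (45 / 2 ^ 10 : ℝ) • u := by
  have e2_mul_x : mul (e 2) x = (1 / 4 : ℝ) • (x + e 2 - e 5) := by
    rw [hcomm]; exact hxe 2
  have e0_mul_x : mul (e 0) x = (1 / 4 : ℝ) • (x + e 0 - e 3) := by
    rw [hcomm]; exact hxe 0
  have e0_mul_e2 : mul (e 0) (e 2)
      = -(135 / 2 ^ 10 : ℝ) • u + (1 / 8 : ℝ) • (e 0 + e 2) + (1 / 16 : ℝ) • e 4 :=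
    he2 0
  have e0_mul_e5 : mul (e 0) (e 5)
      = (45 / 2 ^ 10 : ℝ) • u + (1 / 2 ^ 5 : ℝ) • (x + e 5 + e 0 - e 1 - e 2 - e 3 - e 4) := by
    rw [hcomm]; exact he1 5
  rw [e2_mul_x, map_smul, map_sub, map_add, e0_mul_x, e0_mul_e2, e0_mul_e5]
  module

end SixA

theorem stmt_6_general (V : Type*) [AddCommGroup V] [Module ℝ V]
    (mul : V →ₗ[ℝ] V →ₗ[ℝ] V)
    (hcomm : ∀ s t : V, mul s t = mul t s)
    (B : V →ₗ[ℝ] V →ₗ[ℝ] ℝ)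
    (u x : V) (e : ZMod 6 → V)
    (hxe : ∀ i : ZMod 6, mul x (e i) = (1 / 4 : ℝ) • (x + e i - e (i + 3)))
    (he1 : ∀ i : ZMod 6, mul (e i) (e (i + 1))
        = (45 / 2 ^ 10 : ℝ) • u + (1 / 2 ^ 5 : ℝ) •
            (x + e i + e (i + 1) - e (i + 2) - e (i + 3) - e (i + 4) - e (i + 5)))
    (he2 : ∀ i : ZMod 6, mul (e i) (e (i + 2))
        = -(135 / 2 ^ 10 : ℝ) • u + (1 / 8 : ℝ) • (e i + e (i + 2)) + (1 / 16 : ℝ) • e (i + 4))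
    (w : V)
    (hwu : B w u = 0)
    (hw0 : B w (e 0) = 1 / 2 ^ 5)
    (hw2 : B w (e 2) = 1 / 2 ^ 5)
    (hw4 : B w (e 4) = 1 / 2 ^ 5) :
    B w (mul (e 0) (mul (e 2) x))
      = (1 / 2 ^ 7 : ℝ) *
          (7 * B w x - 7 * B w (e 3) - B w (e 5) + B w (e 1) + 19 / 2 ^ 5) := by
  rw [e0_mul_e2_mul_x hcomm hxe he1 he2]
  simp only [map_add, map_sub, map_smul, smul_eq_mul, hwu, hw0, hw2, hw4]
  ring

/-- (Lemma 4.2 at the level of the 6A Griess algebra.) If `w`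
satisfies `(w|u) = 0` and `(w|e_0) = (w|e_2) = (w|e_4) = 2^{-5}`, then
`(w | e_0·(e_2·x)) = 2^{-7}(7(w|x) - 7(w|e_3) - (w|e_5) + (w|e_1) + 19·2^{-5})`. -/
theorem stmt_6 (V : Type*) [AddCommGroup V] [Module ℝ V]
    (mul : V →ₗ[ℝ] V →ₗ[ℝ] V)
    (hcomm : ∀ s t : V, mul s t = mul t s)
    (B : V →ₗ[ℝ] V →ₗ[ℝ] ℝ)
    (hsymm : ∀ s t : V, B s t = B t s)
    (u x : V) (e : ZMod 6 → V)
    (huu : mul u u = (2 : ℝ) • u)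
    (hxx : mul x x = (2 : ℝ) • x)
    (hee : ∀ i : ZMod 6, mul (e i) (e i) = (2 : ℝ) • e i)
    (hux : mul u x = 0)
    (hue : ∀ i : ZMod 6, mul u (e i)
        = (5 / 16 : ℝ) • u + (4 / 9 : ℝ) • e i - (2 / 9 : ℝ) • (e (i + 2) + e (i + 4)))
    (hxe : ∀ i : ZMod 6, mul x (e i) = (1 / 4 : ℝ) • (x + e i - e (i + 3)))
    (he1 : ∀ i : ZMod 6, mul (e i) (e (i + 1))
        = (45 / 2 ^ 10 : ℝ) • u + (1 / 2 ^ 5 : ℝ) •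
            (x + e i + e (i + 1) - e (i + 2) - e (i + 3) - e (i + 4) - e (i + 5)))
    (he2 : ∀ i : ZMod 6, mul (e i) (e (i + 2))
        = -(135 / 2 ^ 10 : ℝ) • u + (1 / 8 : ℝ) • (e i + e (i + 2)) + (1 / 16 : ℝ) • e (i + 4))
    (he3 : ∀ i : ZMod 6, mul (e i) (e (i + 3)) = (1 / 4 : ℝ) • (e i + e (i + 3) - x))
    (hBuu : B u u = 2 / 5)
    (hBxx : B x x = 1 / 4)
    (hBee : ∀ i : ZMod 6, B (e i) (e i) = 1 / 4)
    (hBux : B u x = 0)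
    (hBue : ∀ i : ZMod 6, B u (e i) = 1 / 16)
    (hBxe : ∀ i : ZMod 6, B x (e i) = 1 / 32)
    (hBe1 : ∀ i : ZMod 6, B (e i) (e (i + 1)) = 5 / 2 ^ 10)
    (hBe2 : ∀ i : ZMod 6, B (e i) (e (i + 2)) = 13 / 2 ^ 10)
    (hBe3 : ∀ i : ZMod 6, B (e i) (e (i + 3)) = 1 / 32)
    (w : V)
    (hwu : B w u = 0)
    (hw0 : B w (e 0) = 1 / 2 ^ 5)
    (hw2 : B w (e 2) = 1 / 2 ^ 5)
    (hw4 : B w (e 4) = 1 / 2 ^ 5) :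
    B w (mul (e 0) (mul (e 2) x))
      = (1 / 2 ^ 7 : ℝ) *
          (7 * B w x - 7 * B w (e 3) - B w (e 5) + B w (e 1) + 19 / 2 ^ 5) :=
  stmt_6_general V mul hcomm B u x e hxe he1 he2 w hwu hw0 hw2 hw4
end

section
/- Let a, b, x, y be elements of V with (a|b) = 13·2^{-10}, (a|x) = (a|y) = (b|x) = (b|y) = 2^{-5}, (x|y) = 2^{-5}, (a|x·y) = (b|x·y) = 2^{-6}, (x|a·b) = (y|a·b) = 5·2^{-9}, and (x | a·(b·y)) = 13·2^{-11}. Define a∘x = a + x − 4a·x and b∘y = b + y − 4b·y. Then (a∘x | b∘y) = 5·2^{-10}. (This is Proposition 4.3(1): when ⟨a,b⟩ is of 3A-type and ⟨x,y⟩ is of 2A-type, the inner-product values listed are those established in Lemmas 4.1 and 4.2 of the paper, and the conclusion says that a∘x and b∘y generate a 6A-algebra.) -/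
/-! Expanding `(a + x - 4 a·x | b + y - 4 b·y)` bilinearly leaves nine terms. With a commutative
product, invariance of the symmetric form makes `(s | t·w)` totally symmetric in `s, t, w`, so each
term is one of the prescribed values. -/

section InvariantForm

variable {R V : Type*} [CommRing R] [AddCommGroup V] [Module R V]

theorem LinearMap.apply_sub_smul_sub_smul (B : V →ₗ[R] V →ₗ[R] R) (s t u v : V) (c : R) :
    B (s - c • u) (t - c • v) = B s t - c * (B s v + B u t) + c ^ 2 * B u v := by
  simp only [map_sub, map_smul, LinearMap.sub_apply, LinearMap.smul_apply, smul_eq_mul]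
  ring

theorem apply_mul_comm_left_of_invariant {mul : V →ₗ[R] V →ₗ[R] V} {B : V →ₗ[R] V →ₗ[R] R}
    (hcomm : ∀ s t : V, mul s t = mul t s) (hsymm : ∀ s t : V, B s t = B t s)
    (hinv : ∀ s t w : V, B (mul s t) w = B t (mul s w)) (s t w : V) :
    B s (mul t w) = B t (mul s w) := by
  rw [hsymm, hinv, hsymm t, hinv, hcomm t s]

end InvariantForm

theorem stmt_7_general (V : Type*) [AddCommGroup V] [Module ℝ V]
    (mul : V →ₗ[ℝ] V →ₗ[ℝ] V)
    (hcomm : ∀ s t : V, mul s t = mul t s)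
    (B : V →ₗ[ℝ] V →ₗ[ℝ] ℝ)
    (hsymm : ∀ s t : V, B s t = B t s)
    (hinv : ∀ s t w : V, B (mul s t) w = B t (mul s w))
    (a b x y : V)
    (hBab : B a b = 13 / 2 ^ 10)
    (hBay : B a y = 1 / 2 ^ 5)
    (hBbx : B b x = 1 / 2 ^ 5)
    (hBxy : B x y = 1 / 2 ^ 5)
    (haxy : B a (mul x y) = 1 / 2 ^ 6) (hbxy : B b (mul x y) = 1 / 2 ^ 6)
    (hxab : B x (mul a b) = 5 / 2 ^ 9) (hyab : B y (mul a b) = 5 / 2 ^ 9)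
    (hxaby : B x (mul a (mul b y)) = 13 / 2 ^ 11) :
    B (a + x - (4 : ℝ) • mul a x) (b + y - (4 : ℝ) • mul b y) = 5 / 2 ^ 10 := by
  have swap := apply_mul_comm_left_of_invariant hcomm hsymm hinv
  have h_a_by : B a (mul b y) = 5 / 2 ^ 9 := by rw [hcomm, swap, hyab]
  have h_x_by : B x (mul b y) = 1 / 2 ^ 6 := by rw [swap, hbxy]
  have h_ax_b : B (mul a x) b = 5 / 2 ^ 9 := by rw [hinv, hxab]
  have h_ax_y : B (mul a x) y = 1 / 2 ^ 6 := by rw [hcomm, hinv, haxy]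
  have h_ax_by : B (mul a x) (mul b y) = 13 / 2 ^ 11 := by rw [hinv, hxaby]
  have h_xb : B x b = 1 / 2 ^ 5 := by rw [hsymm, hBbx]
  rw [LinearMap.apply_sub_smul_sub_smul]
  simp only [map_add, LinearMap.add_apply, hBab, hBay, h_xb, hBxy, h_a_by, h_x_by, h_ax_b,
    h_ax_y, h_ax_by]
  norm_num

/-- (Proposition 4.3(1).) In a commutative algebra with
invariant symmetric bilinear form, given the listed inner-product values (the
case where `⟨a,b⟩` is of 3A-type and `⟨x,y⟩` of 2A-type), the vectors
`a∘x = a + x - 4a·x` and `b∘y = b + y - 4b·y` satisfy `(a∘x | b∘y) = 5·2^{-10}`. -/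
theorem stmt_7 (V : Type*) [AddCommGroup V] [Module ℝ V]
    (mul : V →ₗ[ℝ] V →ₗ[ℝ] V)
    (hcomm : ∀ s t : V, mul s t = mul t s)
    (B : V →ₗ[ℝ] V →ₗ[ℝ] ℝ)
    (hsymm : ∀ s t : V, B s t = B t s)
    (hinv : ∀ s t w : V, B (mul s t) w = B t (mul s w))
    (a b x y : V)
    (hBab : B a b = 13 / 2 ^ 10)
    (hBax : B a x = 1 / 2 ^ 5) (hBay : B a y = 1 / 2 ^ 5)
    (hBbx : B b x = 1 / 2 ^ 5) (hBby : B b y = 1 / 2 ^ 5)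
    (hBxy : B x y = 1 / 2 ^ 5)
    (haxy : B a (mul x y) = 1 / 2 ^ 6) (hbxy : B b (mul x y) = 1 / 2 ^ 6)
    (hxab : B x (mul a b) = 5 / 2 ^ 9) (hyab : B y (mul a b) = 5 / 2 ^ 9)
    (hxaby : B x (mul a (mul b y)) = 13 / 2 ^ 11) :
    B (a + x - (4 : ℝ) • mul a x) (b + y - (4 : ℝ) • mul b y) = 5 / 2 ^ 10 :=
  stmt_7_general V mul hcomm B hsymm hinv a b x y hBab hBay hBbx hBxy haxy hbxy hxab hyab hxaby
end

section
/- Let a, b, x, y be elements of V with (a|b) = 13·2^{-10}, (a|x) = (a|y) = (b|x) = (b|y) = 2^{-5}, (x|y) = 13·2^{-10}, (a|x·y) = (b|x·y) = 5·2^{-9}, (x|a·b) = (y|a·b) = 5·2^{-9}, and (x | a·(b·y)) = 83·2^{-14}. Define a∘x = a + x − 4a·x and b∘y = b + y − 4b·y. Then (a∘x | b∘y) = 13·2^{-10}. (This is Proposition 4.3(2): when both ⟨a,b⟩ and ⟨x,y⟩ are of 3A-type, the inner-product values listed are those established in Lemmas 4.1 and 4.2 of the paper, and the conclusion says that a∘x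 and b∘y generate a 3A-algebra.) -/
/-! Expanding bilinearly, `(a∘x | b∘y)` is a combination of `(a|b)`, `(a|y)`, `(x|b)`, `(x|y)`,
four values of the totally symmetric trilinear form `(s | t·w)`, and
`(a·x | b·y) = (x | a·(b·y))`; every one of them is among the given values. -/

theorem LinearMap.apply_add_sub_smul_add_sub_smul {R V : Type*} [CommRing R] [AddCommGroup V]
    [Module R V] (B : V →ₗ[R] V →ₗ[R] R) (a x p b y q : V) (c : R) :
    B (a + x - c • p) (b + y - c • q) =
      B a b + B a y + B x b + B x y - c * (B a q + B x q + B p b + B p y) + c ^ 2 * B p q := by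
  simp only [map_sub, map_add, map_smul, LinearMap.sub_apply, LinearMap.add_apply,
    LinearMap.smul_apply, smul_eq_mul]
  ring

theorem invariant_form_apply_mul_swap {R V : Type*} [CommSemiring R] [AddCommMonoid V] [Module R V]
    {mul : V →ₗ[R] V →ₗ[R] V} {B : V →ₗ[R] V →ₗ[R] R}
    (hcomm : ∀ s t : V, mul s t = mul t s) (hsymm : ∀ s t : V, B s t = B t s)
    (hinv : ∀ s t w : V, B (mul s t) w = B t (mul s w)) (s t w : V) :
    B s (mul t w) = B t (mul s w) := by
  rw [hsymm, hcomm, hinv, hcomm]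

theorem stmt_8_general (V : Type*) [AddCommGroup V] [Module ℝ V]
    (mul : V →ₗ[ℝ] V →ₗ[ℝ] V)
    (hcomm : ∀ s t : V, mul s t = mul t s)
    (B : V →ₗ[ℝ] V →ₗ[ℝ] ℝ)
    (hsymm : ∀ s t : V, B s t = B t s)
    (hinv : ∀ s t w : V, B (mul s t) w = B t (mul s w))
    (a b x y : V)
    (hBab : B a b = 13 / 2 ^ 10)
    (hBay : B a y = 1 / 2 ^ 5)
    (hBbx : B b x = 1 / 2 ^ 5)
    (hBxy : B x y = 13 / 2 ^ 10)
    (haxy : B a (mul x y) = 5 / 2 ^ 9) (hbxy : B b (mul x y) = 5 / 2 ^ 9)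
    (hxab : B x (mul a b) = 5 / 2 ^ 9) (hyab : B y (mul a b) = 5 / 2 ^ 9)
    (hxaby : B x (mul a (mul b y)) = 83 / 2 ^ 14) :
    B (a + x - (4 : ℝ) • mul a x) (b + y - (4 : ℝ) • mul b y) = 13 / 2 ^ 10 := by
  have hBxb : B x b = 1 / 2 ^ 5 := by rw [hsymm, hBbx]
  have ha_by : B a (mul b y) = 5 / 2 ^ 9 := by
    rw [hcomm b y, invariant_form_apply_mul_swap hcomm hsymm hinv, hyab]
  have hx_by : B x (mul b y) = 5 / 2 ^ 9 := by
    rw [invariant_form_apply_mul_swap hcomm hsymm hinv, hbxy]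
  have hax_b : B (mul a x) b = 5 / 2 ^ 9 := by rw [hinv, hxab]
  have hax_y : B (mul a x) y = 5 / 2 ^ 9 := by rw [hcomm, hinv, haxy]
  have hax_by : B (mul a x) (mul b y) = 83 / 2 ^ 14 := by rw [hinv, hxaby]
  rw [LinearMap.apply_add_sub_smul_add_sub_smul, hBab, hBay, hBxb, hBxy, ha_by, hx_by, hax_b,
    hax_y, hax_by]
  norm_num

/-- (Proposition 4.3(2).) In a commutative algebra with
invariant symmetric bilinear form, given the listed inner-product values (the
case where both `⟨a,b⟩` and `⟨x,y⟩` are of 3A-type), the vectors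
`a∘x = a + x - 4a·x` and `b∘y = b + y - 4b·y` satisfy `(a∘x | b∘y) = 13·2^{-10}`. -/
theorem stmt_8 (V : Type*) [AddCommGroup V] [Module ℝ V]
    (mul : V →ₗ[ℝ] V →ₗ[ℝ] V)
    (hcomm : ∀ s t : V, mul s t = mul t s)
    (B : V →ₗ[ℝ] V →ₗ[ℝ] ℝ)
    (hsymm : ∀ s t : V, B s t = B t s)
    (hinv : ∀ s t w : V, B (mul s t) w = B t (mul s w))
    (a b x y : V)
    (hBab : B a b = 13 / 2 ^ 10)
    (hBax : B a x = 1 / 2 ^ 5) (hBay : B a y = 1 / 2 ^ 5)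
    (hBbx : B b x = 1 / 2 ^ 5) (hBby : B b y = 1 / 2 ^ 5)
    (hBxy : B x y = 13 / 2 ^ 10)
    (haxy : B a (mul x y) = 5 / 2 ^ 9) (hbxy : B b (mul x y) = 5 / 2 ^ 9)
    (hxab : B x (mul a b) = 5 / 2 ^ 9) (hyab : B y (mul a b) = 5 / 2 ^ 9)
    (hxaby : B x (mul a (mul b y)) = 83 / 2 ^ 14) :
    B (a + x - (4 : ℝ) • mul a x) (b + y - (4 : ℝ) • mul b y) = 13 / 2 ^ 10 :=
  stmt_8_general V mul hcomm B hsymm hinv a b x y hBab hBay hBbx hBxy haxy hbxy hxab hyab hxaby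
end

section
/- Let a, x, p, q, r be elements of V with a·p = (1/4)(a + p − x), (a|p) = 2^{-5}, (a|q) = (a|r) = 5·2^{-10}, (x|q) = 5·2^{-10}, and (p|q) = 13·2^{-10}. Then (a | (2^6/135)(2p + 2q + r − 16 p·q)) = 1/80. (This is Lemma 4.10: with p = a∘x, q = b∘y, r = c∘z in the configuration of nine Ising vectors of Section 4.2, the element (2^6/135)(2p + 2q + r − 16 p·q) is the characteristic c = 4/5 Virasoro vector u_{a∘x, b∘y}, and every one of the six Ising vectors a, b, c, x, y, z pairs with it to 1/80; the stated case is (a | u_{a∘x,b∘y}) = 1/80.) -/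
theorem LinearMap.apply_mul_eq_apply_mul_of_invariant {V R : Type*} [CommSemiring R]
    [AddCommMonoid V] [Module R V] (mul : V →ₗ[R] V →ₗ[R] V)
    (hcomm : ∀ s t : V, mul s t = mul t s) (B : V →ₗ[R] V →ₗ[R] R)
    (hinv : ∀ s t w : V, B (mul s t) w = B t (mul s w)) (a p q : V) :
    B a (mul p q) = B (mul a p) q := by
  rw [← hinv, hcomm]

theorem stmt_9_general (V : Type*) [AddCommGroup V] [Module ℝ V]
    (mul : V →ₗ[ℝ] V →ₗ[ℝ] V)
    (hcomm : ∀ s t : V, mul s t = mul t s)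
    (B : V →ₗ[ℝ] V →ₗ[ℝ] ℝ)
    (hinv : ∀ s t w : V, B (mul s t) w = B t (mul s w))
    (a x p q r : V)
    (hap : mul a p = (1 / 4 : ℝ) • (a + p - x))
    (hBap : B a p = 1 / 2 ^ 5)
    (hBaq : B a q = 5 / 2 ^ 10) (hBar : B a r = 5 / 2 ^ 10)
    (hBxq : B x q = 5 / 2 ^ 10)
    (hBpq : B p q = 13 / 2 ^ 10) :
    B a ((2 ^ 6 / 135 : ℝ) •
        ((2 : ℝ) • p + (2 : ℝ) • q + r - (16 : ℝ) • mul p q)) = 1 / 80 := by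
  have hBapq : B a (mul p q) = 13 / 2 ^ 12 := by
    rw [LinearMap.apply_mul_eq_apply_mul_of_invariant mul hcomm B hinv, hap]
    simp only [map_smul, map_add, map_sub, LinearMap.smul_apply, LinearMap.add_apply,
      LinearMap.sub_apply, smul_eq_mul, hBaq, hBpq, hBxq]
    norm_num
  simp only [map_smul, map_add, map_sub, smul_eq_mul, hBap, hBaq, hBar, hBapq]
  norm_num

/-- (Lemma 4.10.) In a commutative algebra with invariant
symmetric bilinear form, if `a·p = (1/4)(a + p - x)`, `(a|p) = 2^{-5}`,
`(a|q) = (a|r) = 5·2^{-10}`, `(x|q) = 5·2^{-10}` and `(p|q) = 13·2^{-10}`, then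
`(a | (2^6/135)(2p + 2q + r - 16p·q)) = 1/80`. -/
theorem stmt_9 (V : Type*) [AddCommGroup V] [Module ℝ V]
    (mul : V →ₗ[ℝ] V →ₗ[ℝ] V)
    (hcomm : ∀ s t : V, mul s t = mul t s)
    (B : V →ₗ[ℝ] V →ₗ[ℝ] ℝ)
    (hsymm : ∀ s t : V, B s t = B t s)
    (hinv : ∀ s t w : V, B (mul s t) w = B t (mul s w))
    (a x p q r : V)
    (hap : mul a p = (1 / 4 : ℝ) • (a + p - x))
    (hBap : B a p = 1 / 2 ^ 5)
    (hBaq : B a q = 5 / 2 ^ 10) (hBar : B a r = 5 / 2 ^ 10)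
    (hBxq : B x q = 5 / 2 ^ 10)
    (hBpq : B p q = 13 / 2 ^ 10) :
    B a ((2 ^ 6 / 135 : ℝ) •
        ((2 : ℝ) • p + (2 : ℝ) • q + r - (16 : ℝ) • mul p q)) = 1 / 80 :=
  stmt_9_general V mul hcomm B hinv a x p q r hap hBap hBaq hBar hBxq hBpq
end

section
/- For every integer n ≥ 1, let G be the symmetric matrix over ℚ whose rows and columns are indexed by the 2-element subsets of {0, 1, …, n}, with entries G_{T,T} = 1/4, G_{T,T'} = 1/32 whenever |T ∩ T'| = 1, and G_{T,T'} = 0 whenever T ∩ T' = ∅. Then G is positive definite (in particular nonsingular). -/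
/-!
Let `M` be the incidence matrix of 2-subsets against points of `{0, …, n}`. Then
`(M Mᵀ)_{T,T'} = |T ∩ T'|`, which is `2` on the diagonal and `0` or `1` off it, because distinct
2-subsets share at most one point. Hence `G = (1/32) M Mᵀ + (3/16) I`: a positive semidefinite
Gram matrix plus a positive multiple of the identity, which is positive definite.
-/

open Finset
open scoped Matrix

theorem Finset.card_inter_lt_of_card_eq_of_ne {α : Type*} [DecidableEq α] {s t : Finset α}
    (hst : #s = #t) (hne : s ≠ t) : #(s ∩ t) < #s := by
  refine card_lt_card (ssubset_iff_subset_ne.2 ⟨inter_subset_left, fun h => hne ?_⟩)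
  exact eq_of_subset_of_card_le (inter_eq_left.1 h) hst.ge

namespace Matrix

def incidence {ι α : Type*} (R : Type*) [DecidableEq α] [Zero R] [One R] (S : ι → Finset α) :
    Matrix ι α R :=
  fun i a => if a ∈ S i then 1 else 0

theorem incidence_mul_transpose_apply {ι α R : Type*} [Fintype α] [DecidableEq α]
    [NonAssocSemiring R] (S : ι → Finset α) (i j : ι) :
    (incidence R S * (incidence R S)ᵀ) i j = #(S i ∩ S j) := by
  simp only [mul_apply, transpose_apply, incidence, mul_ite, mul_one, mul_zero, ← ite_and,
    ← mem_inter, sum_ite_mem, univ_inter, inter_comm (S j), sum_const, nsmul_one]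

end Matrix

theorem stmt_10_general (n : ℕ)
    (G : Matrix {s : Finset (Fin (n + 1)) // s.card = 2}
      {s : Finset (Fin (n + 1)) // s.card = 2} ℚ)
    (hG : ∀ T T', G T T' =
      if T = T' then 1 / 4
      else if (T.1 ∩ T'.1).card = 1 then 1 / 32
      else 0) :
    G.PosDef := by
  set M := Matrix.incidence ℚ (Subtype.val : {s : Finset (Fin (n + 1)) // s.card = 2} → _)
  have hG_eq : G = (1 / 32 : ℚ) • (M * Mᴴ) + (3 / 16 : ℚ) • 1 := by
    ext T T'
    rw [hG, Matrix.conjTranspose_eq_transpose_of_trivial]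
    simp only [Matrix.add_apply, Matrix.smul_apply, Matrix.one_apply, M,
      Matrix.incidence_mul_transpose_apply, smul_eq_mul]
    by_cases hTT' : T = T'
    · subst hTT'
      simp only [inter_self, T.2]
      norm_num
    · have hle := card_inter_lt_of_card_eq_of_ne (T.2.trans T'.2.symm)
        (Subtype.val_injective.ne hTT')
      rw [T.2] at hle
      interval_cases #(T.1 ∩ T'.1) <;> simp [hTT']
  rw [hG_eq]
  exact .posSemidef_add ((Matrix.posSemidef_self_mul_conjTranspose M).smul (by norm_num))
    (Matrix.PosDef.one.smul (by norm_num))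

/-- (Gram matrix of Proposition 4.15.) For `n ≥ 1`, the
symmetric matrix indexed by the 2-element subsets of `{0, 1, …, n}` with
diagonal entries `1/4`, entries `1/32` for subsets meeting in one point, and
`0` for disjoint subsets, is positive definite. -/
theorem stmt_10 (n : ℕ) (hn : 1 ≤ n)
    (G : Matrix {s : Finset (Fin (n + 1)) // s.card = 2}
      {s : Finset (Fin (n + 1)) // s.card = 2} ℚ)
    (hG : ∀ T T', G T T' =
      if T = T' then 1 / 4
      else if (T.1 ∩ T'.1).card = 1 then 1 / 32
      else 0) :
    G.PosDef :=
  stmt_10_general n G hG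
end

section
/- With the Gram matrix G of the 13 symbols u; a, b, c; a′, b′, c′; a″, b″, c″; x, y, z as specified, the vector η = (1/6)u + (16/27)(a + b + c + a′ + b′ + c′ + a″ + b″ + c″) + (4/9)(x + y + z) satisfies G(η, t) = G(t, t) for each of the 13 basis symbols t, and 2·G(η, η) = 52/15. (This is the conformal-vector computation of Theorem 4.6: η is the conformal vector of ⟨a,b,x,y⟩ and has central charge 52/15.) -/
/-- Pairing of an index symbol (`x = 10`, `y = 11`, `z = 12`) with a letter
symbol `l` (letters `a,b,c` are `1,2,3`, `a′,b′,c′` are `4,5,6`, and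
`a″,b″,c″` are `7,8,9`). -/
def idxLetter12 (idx l : Fin 13) : ℚ :=
  if idx.val = 10 then (if l.val ≤ 6 then 1 / 32 else 0)
  else if idx.val = 11 then (if l.val ≤ 3 ∨ 7 ≤ l.val then 1 / 32 else 0)
  else (if 4 ≤ l.val then 1 / 32 else 0)

/-- The 13×13 Gram matrix of Theorem 4.6, with rows and columns indexed by
`u` (index 0); the letter symbols `a,b,c` (1,2,3), `a′,b′,c′` (4,5,6),
`a″,b″,c″` (7,8,9); and `x, y, z` (10, 11, 12).  A letter symbol `t` with
`1 ≤ t ≤ 9` lies in triple `(t-1)/3` and carries letter `(t-1) % 3`. -/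
def gram12 : Matrix (Fin 13) (Fin 13) ℚ := Matrix.of fun i j =>
  if i = j then (if i.val = 0 then 2 / 5 else 1 / 4)
  else if i.val = 0 then (if j.val ≤ 9 then 1 / 16 else 0)
  else if j.val = 0 then (if i.val ≤ 9 then 1 / 16 else 0)
  else if i.val ≤ 9 ∧ j.val ≤ 9 then
    (if (i.val - 1) / 3 = (j.val - 1) / 3 then 13 / 2 ^ 10
     else if (i.val - 1) % 3 = (j.val - 1) % 3 then 1 / 32
     else 5 / 2 ^ 10)
  else if j.val ≤ 9 then idxLetter12 i j
  else if i.val ≤ 9 then idxLetter12 j i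
  else 1 / 32

/-- The coefficient vector of `η = (1/6)u + (16/27)(a + b + c + a′ + b′ + c′ +
a″ + b″ + c″) + (4/9)(x + y + z)`. -/
def eta12 : Fin 13 → ℚ := fun i =>
  if i.val = 0 then 1 / 6 else if i.val ≤ 9 then 16 / 27 else 4 / 9

/-!
The identities `G(η, t) = G(t, t)` are a finite check over `ℚ`. Given them, the central charge
needs no evaluation of the full quadratic form: `G(η, η) = ∑ₜ ηₜ G(η, t) = ∑ₜ ηₜ G(t, t)
= 1/6 · 2/5 + 9 · 16/27 · 1/4 + 3 · 4/9 · 1/4 = 26/15`.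
-/

open Matrix

theorem dotProduct_mulVec_self_eq_of_vecMul_eq_diag {n R : Type*} [Fintype n] [CommSemiring R]
    {M : Matrix n n R} {v : n → R} (h : v ᵥ* M = fun i => M i i) :
    v ⬝ᵥ (M *ᵥ v) = ∑ i, v i * M i i := by
  rw [dotProduct_mulVec, h, dotProduct_comm]
  rfl

theorem vecMul_eta12_gram12 : eta12 ᵥ* gram12 = fun t => gram12 t t :=
  funext (by decide +kernel)

theorem sum_eta12_mul_gram12_diag : ∑ t, eta12 t * gram12 t t = 26 / 15 := by
  decide +kernel

/-- (Conformal vector of Theorem 4.6.) The vector `η`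
satisfies `G(η, t) = G(t, t)` for each of the 13 basis symbols `t`, and
`2·G(η, η) = 52/15` (central charge `52/15`). -/
theorem stmt_12 :
    (∀ t : Fin 13, Matrix.vecMul eta12 gram12 t = gram12 t t) ∧
    2 * dotProduct eta12 (gram12.mulVec eta12) = 52 / 15 := by
  refine ⟨congrFun vecMul_eta12_gram12, ?_⟩
  rw [dotProduct_mulVec_self_eq_of_vecMul_eq_diag vecMul_eta12_gram12,
    sum_eta12_mul_gram12_diag]
  norm_num
end

section
/- Let B be the symmetric bilinear pairing on formal linear combinations of the 18 symbols u_1, u_2, u_3, u_4; a, b, c, x, y, z; and t∘w for t ∈ {a,b,c}, w ∈ {x,y,z}, determined by: B(u_i,u_i) = 2/5, B(u_i,u_j) = 0 for i ≠ j; B(u_1,t) = 1/16 for t ∈ {a,b,c}, B(u_1,t) = 0 for t ∈ {x,y,z}; B(u_2,t) = 0 for t ∈ {a,b,c}, B(u_2,t) = 1/16 for t ∈ {x,y,z}; B(u_3,t) = B(u_4,t) = 1/80 for all six singles t; B(u_i,p) = 1/16 for every composite p and i = 1,2,3,4; diagonal entries 1/4 for all singles and composites; B = 13/2^10 within {a,b,c}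 and within {x,y,z}; B = 1/32 between a letter single and an index single; between a single s and a composite t∘w, B = 1/32 if s = t or s = w and B = 5/2^10 otherwise; B = 13/2^10 between any two distinct composites. Set η = (17/22)(u_1 + u_2) + (10/11)(u_3 + u_4) + (16/33)(a + b + c + x + y + z). Then B(η, t) = B(t, t) for each of the 18 symbols t, and 2·B(η, η) = 228/55. (This is Proposition 4.13: η is the conformal vector of ⟨a,b,x,y⟩ when both ⟨a,b⟩ and ⟨x,y⟩ are 3A-algebras, and it has central charge 228/55.) -/
/-- Pairing of a single symbol `s` (`a,b,c` are `4,5,6`; `x,y,z` are `7,8,9`)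
with a composite symbol `t∘w` encoded as `k` with `10 ≤ k ≤ 18`, whose letter
component is `(k-10)/3 ∈ {a,b,c}` and whose index component is
`(k-10) % 3 ∈ {x,y,z}`: it is `1/32` if `s = t` or `s = w`, else `5/2^10`. -/
def singleComp14 (s k : Fin 19) : ℚ :=
  if (s.val ≤ 6 ∧ s.val - 4 = (k.val - 10) / 3) ∨
      (7 ≤ s.val ∧ s.val - 7 = (k.val - 10) % 3) then 1 / 32
  else 5 / 2 ^ 10

/-- Pairing of `u_1, u_2, u_3, u_4` (indices `0,1,2,3`) with a non-`u` symbol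
`j`: `1/16` with every composite; `u_1` pairs to `1/16` with `a,b,c` and `0`
with `x,y,z`; `u_2` the other way round; `u_3` and `u_4` pair to `1/80` with
all six singles. -/
def uRow14 (i j : Fin 19) : ℚ :=
  if 10 ≤ j.val then 1 / 16
  else if i.val = 0 then (if j.val ≤ 6 then 1 / 16 else 0)
  else if i.val = 1 then (if j.val ≤ 6 then 0 else 1 / 16)
  else 1 / 80

/-- The bilinear pairing of Proposition 4.13 / Theorem 4.14 on the symbols
`u_1, u_2, u_3, u_4` (0,1,2,3); the six singles `a, b, c` (4,5,6) and
`x, y, z` (7,8,9); and the nine composites `t∘w`, `t ∈ {a,b,c}`,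
`w ∈ {x,y,z}` (indices `10 + 3·t + w`). -/
def gram14 : Matrix (Fin 19) (Fin 19) ℚ := Matrix.of fun i j =>
  if i = j then (if i.val ≤ 3 then 2 / 5 else 1 / 4)
  else if i.val ≤ 3 then (if j.val ≤ 3 then 0 else uRow14 i j)
  else if j.val ≤ 3 then uRow14 j i
  else if i.val ≤ 9 ∧ j.val ≤ 9 then
    (if (i.val ≤ 6 ↔ j.val ≤ 6) then 13 / 2 ^ 10 else 1 / 32)
  else if i.val ≤ 9 then singleComp14 i j
  else if j.val ≤ 9 then singleComp14 j i
  else 13 / 2 ^ 10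

/-- The coefficient vector of
`η = (17/22)(u_1 + u_2) + (10/11)(u_3 + u_4) + (16/33)(a + b + c + x + y + z)`. -/
def eta14 : Fin 19 → ℚ := fun i =>
  if i.val ≤ 1 then 17 / 22
  else if i.val ≤ 3 then 10 / 11
  else if i.val ≤ 9 then 16 / 33
  else 0

/-! Only the rows `B(η, t)` need computing. Bilinearity then gives
`B(η, η) = ∑ₜ ηₜ B(η, t) = ∑ₜ ηₜ B(t, t)
  = 2·(17/22)·(2/5) + 2·(10/11)·(2/5) + 6·(16/33)·(1/4) = 114/55`. -/

namespace Matrix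

theorem dotProduct_mulVec_eq_sum_diag {n R : Type*} [Fintype n] [CommSemiring R]
    {G : Matrix n n R} {v : n → R} (h : ∀ t, (v ᵥ* G) t = G t t) :
    v ⬝ᵥ (G *ᵥ v) = ∑ t, v t * G t t := by
  rw [dotProduct_mulVec, dotProduct]
  exact Finset.sum_congr rfl fun t _ => by rw [h, mul_comm]

end Matrix

theorem vecMul_eta14_gram14_eq_diag : ∀ t : Fin 19, Matrix.vecMul eta14 gram14 t = gram14 t t := by
  decide +kernel

theorem sum_eta14_mul_gram14_diag : ∑ t, eta14 t * gram14 t t = 114 / 55 := by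
  decide +kernel

/-- (Proposition 4.13.) With respect to the pairing `B` of
Theorem 4.14, the vector `η` satisfies `B(η, t) = B(t, t)` for every symbol
`t`, and `2·B(η, η) = 228/55` (central charge `228/55`). -/
theorem stmt_14 :
    (∀ t : Fin 19, Matrix.vecMul eta14 gram14 t = gram14 t t) ∧
    2 * dotProduct eta14 (gram14.mulVec eta14) = 228 / 55 := by
  refine ⟨vecMul_eta14_gram14_eq_diag, ?_⟩
  rw [Matrix.dotProduct_mulVec_eq_sum_diag vecMul_eta14_gram14_eq_diag, sum_eta14_mul_gram14_diag]
  norm_num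
end

section
/- Fix an integer n ≥ 1 and let B be the symmetric bilinear pairing on formal linear combinations of the symbols u; a_i, b_i, c_i for 0 ≤ i ≤ n; x_i for 1 ≤ i ≤ n; and z_{jk} for 1 ≤ j < k ≤ n, determined by the values listed in the context. Set ω_n = (3(3−n)/(2(n+7)))·u + (16/(3(n+7)))·Σ_{i=0}^{n}(a_i + b_i + c_i) + (4/(n+7))·( Σ_{i=1}^{n} x_i + Σ_{1≤j<k≤n} z_{jk} ). Then B(ω_n, t) = B(t, t) for every symbol t, and 2·B(ω_n, ω_n) = (n+2)(5n+29)/(5(n+7)). (This is the conformal-vector computation of Theorem 4.17: ω_n is the conformal vector of the (2A,3A)-generated subalgebra X^[n] = ⟨a, b, x^1, …, x^n⟩ and has central charge (n+2)(5n+29)/(5(n+7)).) -/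
abbrev Sym15 (n : ℕ) :=
  Unit ⊕ (Fin 3 × Fin (n + 1)) ⊕ Fin n ⊕ {p : Fin n × Fin n // p.1 < p.2}

/-- The symmetric bilinear pairing of Theorem 4.17 on the symbols `Sym15 n`. -/
def B15 (n : ℕ) : Sym15 n → Sym15 n → ℚ
  | Sum.inl _, Sum.inl _ => 2 / 5
  | Sum.inl _, Sum.inr (Sum.inl _) => 1 / 16
  | Sum.inr (Sum.inl _), Sum.inl _ => 1 / 16
  | Sum.inl _, _ => 0
  | _, Sum.inl _ => 0
  | Sum.inr (Sum.inl (l, i)), Sum.inr (Sum.inl (l', i')) =>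
      if l = l' ∧ i = i' then 1 / 4
      else if i = i' then 13 / 2 ^ 10
      else if l = l' then 1 / 32
      else 5 / 2 ^ 10
  | Sum.inr (Sum.inl (_, i)), Sum.inr (Sum.inr (Sum.inl j)) =>
      if i.val = 0 ∨ i.val = j.val + 1 then 1 / 32 else 0
  | Sum.inr (Sum.inr (Sum.inl j)), Sum.inr (Sum.inl (_, i)) =>
      if i.val = 0 ∨ i.val = j.val + 1 then 1 / 32 else 0
  | Sum.inr (Sum.inl (_, i)), Sum.inr (Sum.inr (Sum.inr ⟨(j, k), _⟩)) =>
      if i.val = j.val + 1 ∨ i.val = k.val + 1 then 1 / 32 else 0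
  | Sum.inr (Sum.inr (Sum.inr ⟨(j, k), _⟩)), Sum.inr (Sum.inl (_, i)) =>
      if i.val = j.val + 1 ∨ i.val = k.val + 1 then 1 / 32 else 0
  | Sum.inr (Sum.inr (Sum.inl j)), Sum.inr (Sum.inr (Sum.inl j')) =>
      if j = j' then 1 / 4 else 1 / 32
  | Sum.inr (Sum.inr (Sum.inl j)), Sum.inr (Sum.inr (Sum.inr ⟨(l, m), _⟩)) =>
      if j = l ∨ j = m then 1 / 32 else 0
  | Sum.inr (Sum.inr (Sum.inr ⟨(l, m), _⟩)), Sum.inr (Sum.inr (Sum.inl j)) =>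
      if j = l ∨ j = m then 1 / 32 else 0
  | Sum.inr (Sum.inr (Sum.inr ⟨(j, k), _⟩)), Sum.inr (Sum.inr (Sum.inr ⟨(l, m), _⟩)) =>
      if j = l ∧ k = m then 1 / 4
      else if j = l ∨ j = m ∨ k = l ∨ k = m then 1 / 32
      else 0

/-- The coefficient vector of the conformal vector
`ω_n = (3(3−n)/(2(n+7)))·u + (16/(3(n+7)))·Σ(a_i + b_i + c_i)
     + (4/(n+7))·(Σ x_i + Σ z_{jk})`. -/
def omega15 (n : ℕ) : Sym15 n → ℚ
  | Sum.inl _ => 3 * (3 - (n : ℚ)) / (2 * ((n : ℚ) + 7))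
  | Sum.inr (Sum.inl _) => 16 / (3 * ((n : ℚ) + 7))
  | Sum.inr (Sum.inr _) => 4 / ((n : ℚ) + 7)

/-! The vector `ω_n` is constant on the three blocks `{u}`, `{a_i, b_i, c_i}` and
`{x_j, z_jk}`, so `B(ω_n, t)` is a combination of the block sums `∑_{s ∈ block} B(s, t)`.
Each block sum only counts how many symbols of the block share an index (or a letter) with
`t`, and for the pairs `z_jk` these counts follow from summing over all ordered pairs and
halving. The central charge then comes for free: `B(ω_n, ω_n) = ∑_t ω_t B(ω_n, t)
= ∑_t ω_t B(t, t)`. -/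

open Finset

section CountingSums

variable {α β R : Type*} [Fintype α] [DecidableEq α] [Fintype β] [DecidableEq β] [CommRing R]

theorem sum_ite_eq_else (a : α) (v c : R) :
    ∑ x, (if x = a then v else c) = v + (Fintype.card α - 1) * c := by
  rw [Fintype.sum_eq_add_sum_compl a, if_pos rfl,
    sum_congr rfl fun x hx => if_neg (by simpa using hx), sum_const, card_compl, card_singleton,
    nsmul_eq_mul, Nat.cast_sub (Fintype.card_pos_iff.2 ⟨a⟩), Nat.cast_one]

theorem sum_ite_eq_or_eq {a b : α} (hab : a ≠ b) (c : R) :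
    ∑ x, (if x = a ∨ x = b then c else 0) = 2 * c := by
  rw [sum_ite, sum_const_zero, add_zero, sum_const, filter_or, filter_eq', filter_eq',
    if_pos (mem_univ _), if_pos (mem_univ _), ← insert_eq, card_pair hab, two_nsmul, two_mul]

theorem sum_prod_ite_eq (a : α) (b : β) (v w x y : R) :
    ∑ p : α × β,
        (if p.1 = a ∧ p.2 = b then v else if p.2 = b then w else if p.1 = a then x else y)
      = v + (Fintype.card α - 1) * w + (Fintype.card β - 1) * x
        + (Fintype.card α - 1) * (Fintype.card β - 1) * y := by
  have row : ∀ l : α,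
      ∑ i : β, (if l = a ∧ i = b then v else if i = b then w else if l = a then x else y)
        = if l = a then v + (Fintype.card β - 1) * x else w + (Fintype.card β - 1) * y := by
    intro l
    split_ifs with hl <;> rw [← sum_ite_eq_else b] <;> refine sum_congr rfl fun i _ => ?_ <;>
      by_cases hi : i = b <;> simp [hl, hi]
  rw [Fintype.sum_prod_type]
  simp only [row, sum_ite_eq_else]
  ring

end CountingSums

section PairSums

variable {α R : Type*} [Fintype α] [LinearOrder α]

theorem two_mul_sum_pairs_lt [CommRing R] (g : α → α → R) (hg : ∀ j k, g j k = g k j) :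
    2 * ∑ p : {p : α × α // p.1 < p.2}, g p.1.1 p.1.2
      = ∑ j, ∑ k, g j k - ∑ j, g j j := by
  have hlt : ∑ p : {p : α × α // p.1 < p.2}, g p.1.1 p.1.2
      = ∑ j, ∑ k, if j < k then g j k else 0 := by
    rw [← sum_subtype (univ.filter fun p : α × α => p.1 < p.2) (by simp) (fun p => g p.1 p.2),
      sum_filter, Fintype.sum_prod_type]
  have hgt : ∑ j, ∑ k, (if k < j then g j k else 0)
      = ∑ j, ∑ k, if j < k then g j k else 0 := by
    rw [sum_comm]; simp only [hg]
  have trichotomy : ∀ j k, g j k = (if j < k then g j k else 0) + (if k < j then g j k else 0)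
      + if j = k then g j k else 0 := by
    intro j k
    rcases lt_trichotomy j k with h | rfl | h
    · simp [h, h.not_gt, h.ne]
    · simp
    · simp [h, h.not_gt, h.ne']
  rw [hlt, two_mul, eq_sub_iff_add_eq]
  conv_rhs => rw [sum_congr rfl fun j _ => sum_congr rfl fun k _ => trichotomy j k]
  simp only [sum_add_distrib, hgt, sum_ite_eq, mem_univ, if_true]

theorem sum_pairs_lt_const [Field R] [CharZero R] (c : R) :
    ∑ _p : {p : α × α // p.1 < p.2}, c = Fintype.card α * (Fintype.card α - 1) / 2 * c := by
  have h := two_mul_sum_pairs_lt (R := R) (α := α) (fun _ _ => c) (fun _ _ => rfl)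
  simp only [sum_const, card_univ, nsmul_eq_mul] at h ⊢
  linear_combination h / 2

theorem sum_pairs_lt_ite_mem [Field R] [CharZero R] (a : α) (c : R) :
    ∑ p : {p : α × α // p.1 < p.2}, (if a = p.1.1 ∨ a = p.1.2 then c else 0)
      = (Fintype.card α - 1) * c := by
  have row : ∀ j, ∑ k, (if a = j ∨ a = k then c else 0)
      = if j = a then Fintype.card α * c else c := by
    intro j
    rcases eq_or_ne j a with rfl | hj
    · simp
    · simp [hj, hj.symm]
  have h := two_mul_sum_pairs_lt (fun j k => if a = j ∨ a = k then c else 0)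
    fun j k => by simp only [or_comm]
  rw [sum_congr rfl fun j _ => row j, sum_ite_eq_else] at h
  simp only [or_self, sum_ite_eq, mem_univ, if_true] at h
  linear_combination h / 2

end PairSums

namespace Sym15
variable {n : ℕ}

abbrev u : Sym15 n := .inl ()
abbrev abc (p : Fin 3 × Fin (n + 1)) : Sym15 n := .inr (.inl p)
abbrev x (j : Fin n) : Sym15 n := .inr (.inr (.inl j))
abbrev z (q : {p : Fin n × Fin n // p.1 < p.2}) : Sym15 n := .inr (.inr (.inr q))

theorem sum_omega15_mul (f : Sym15 n → ℚ) :
    ∑ s, omega15 n s * f s = 3 * (3 - n) / (2 * (n + 7)) * f u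
      + 16 / (3 * (n + 7)) * ∑ p, f (abc p)
      + 4 / (n + 7) * (∑ j, f (x j) + ∑ q, f (z q)) := by
  simp only [Fintype.sum_sum_type, Fintype.univ_unit, sum_singleton, omega15, ← mul_sum]
  ring

theorem sum_B15_abc_abc (p : Fin 3 × Fin (n + 1)) :
    ∑ p', B15 n (abc p') (abc p) = 1 / 4 + 13 / 2 ^ 9 + n / 32 + 5 * n / 2 ^ 9 := by
  simp only [B15, sum_prod_ite_eq, Fintype.card_fin]
  push_cast
  ring

-- `a_0` meets every `x_j`; `a_{i+1}` meets `x_{i+1}` and the `n - 1` symbols `z_{jk}` with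
-- `i + 1 ∈ {j, k}`.
theorem sum_B15_x_abc_add_sum_B15_z_abc (p : Fin 3 × Fin (n + 1)) :
    ∑ j, B15 n (x j) (abc p) + ∑ q, B15 n (z q) (abc p) = n / 32 := by
  obtain ⟨l, i⟩ := p
  induction i using Fin.cases with
  | zero => simp [B15, div_eq_mul_inv]
  | succ i =>
    simp only [B15, Fin.val_succ, Nat.add_right_cancel_iff, Fin.val_inj,
      Nat.add_one_ne_zero, false_or, sum_ite_eq, mem_univ, if_true, sum_pairs_lt_ite_mem,
      Fintype.card_fin]
    ring

theorem sum_B15_abc_x (j : Fin n) : ∑ p, B15 n (abc p) (x j) = 3 / 16 := by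
  norm_num [B15, Fintype.sum_prod_type, Fin.sum_univ_succ, Fin.val_inj]

theorem sum_B15_abc_z (q : {p : Fin n × Fin n // p.1 < p.2}) :
    ∑ p, B15 n (abc p) (z q) = 3 / 16 := by
  obtain ⟨⟨j, k⟩, hjk⟩ := q
  norm_num [B15, Fintype.sum_prod_type, Fin.sum_univ_succ, Fin.val_inj, sum_ite_eq_or_eq hjk.ne]

-- Two increasing pairs sharing both points are equal, so `B(z_q', z_q)` counts the points of `q`
-- lying in `q'`, corrected on the diagonal.
theorem B15_z_z (q q' : {p : Fin n × Fin n // p.1 < p.2}) :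
    B15 n (z q') (z q) = (if q.1.1 = q'.1.1 ∨ q.1.1 = q'.1.2 then 1 / 32 else 0)
      + (if q.1.2 = q'.1.1 ∨ q.1.2 = q'.1.2 then 1 / 32 else 0)
      + if q' = q then 3 / 16 else 0 := by
  obtain ⟨⟨l, m⟩, hlm : l < m⟩ := q
  obtain ⟨⟨j, k⟩, hjk : j < k⟩ := q'
  rw [Fin.lt_def] at hlm hjk
  simp only [B15, Subtype.mk.injEq, Prod.mk.injEq, Fin.ext_iff]
  split_ifs <;> first | omega | norm_num

theorem sum_B15_z_z (q : {p : Fin n × Fin n // p.1 < p.2}) :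
    ∑ q', B15 n (z q') (z q) = (n + 2) / 16 := by
  simp only [B15_z_z, sum_add_distrib, sum_pairs_lt_ite_mem, sum_ite_eq', mem_univ, if_true,
    Fintype.card_fin]
  ring

theorem sum_omega15_mul_B15_u : ∑ s, omega15 n s * B15 n s u = 2 / 5 := by
  rw [sum_omega15_mul]
  simp only [B15, sum_const, card_univ, Fintype.card_prod, Fintype.card_fin, nsmul_eq_mul]
  push_cast
  field_simp
  ring

theorem sum_omega15_mul_B15_abc (p : Fin 3 × Fin (n + 1)) :
    ∑ s, omega15 n s * B15 n s (abc p) = 1 / 4 := by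
  rw [sum_omega15_mul, sum_B15_abc_abc, sum_B15_x_abc_add_sum_B15_z_abc]
  simp only [B15]
  field_simp
  ring

theorem sum_omega15_mul_B15_x (j : Fin n) : ∑ s, omega15 n s * B15 n s (x j) = 1 / 4 := by
  rw [sum_omega15_mul, sum_B15_abc_x]
  simp only [B15, sum_ite_eq_else, sum_pairs_lt_ite_mem, Fintype.card_fin]
  field_simp
  ring

theorem sum_omega15_mul_B15_z (q : {p : Fin n × Fin n // p.1 < p.2}) :
    ∑ s, omega15 n s * B15 n s (z q) = 1 / 4 := by
  rw [sum_omega15_mul, sum_B15_abc_z, sum_B15_z_z]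
  obtain ⟨⟨j, k⟩, hjk : j < k⟩ := q
  simp only [B15, sum_ite_eq_or_eq hjk.ne]
  field_simp
  ring

theorem sum_omega15_mul_B15_eq_self (t : Sym15 n) :
    ∑ s, omega15 n s * B15 n s t = B15 n t t := by
  rcases t with ⟨⟨⟩⟩ | p | j | q
  · exact sum_omega15_mul_B15_u
  · exact (sum_omega15_mul_B15_abc p).trans (by simp [B15])
  · exact (sum_omega15_mul_B15_x j).trans (by simp [B15])
  · exact (sum_omega15_mul_B15_z q).trans (by simp [B15])

theorem sum_omega15_mul_B15_self :
    ∑ t, omega15 n t * B15 n t t = (n + 2) * (5 * n + 29) / (10 * (n + 7)) := by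
  have hz : ∀ q : {p : Fin n × Fin n // p.1 < p.2}, B15 n (z q) (z q) = 1 / 4 := fun q => by
    simp [B15]
  rw [sum_omega15_mul, sum_congr rfl fun q _ => hz q, sum_pairs_lt_const]
  simp only [B15, and_self, if_true, sum_const, card_univ, Fintype.card_prod, Fintype.card_fin,
    nsmul_eq_mul]
  push_cast
  field_simp
  ring

end Sym15

theorem stmt_15_general (n : ℕ) :
    (∀ t : Sym15 n, (∑ s : Sym15 n, omega15 n s * B15 n s t) = B15 n t t) ∧
    2 * (∑ s : Sym15 n, ∑ t : Sym15 n, omega15 n s * omega15 n t * B15 n s t)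
      = ((n : ℚ) + 2) * (5 * (n : ℚ) + 29) / (5 * ((n : ℚ) + 7)) := by
  refine ⟨Sym15.sum_omega15_mul_B15_eq_self, ?_⟩
  have hquad : ∑ s, ∑ t, omega15 n s * omega15 n t * B15 n s t
      = ∑ t, omega15 n t * B15 n t t := by
    rw [sum_comm]
    refine sum_congr rfl fun t _ => ?_
    simp_rw [mul_right_comm _ (omega15 n t), ← sum_mul, Sym15.sum_omega15_mul_B15_eq_self,
      mul_comm]
  rw [hquad, Sym15.sum_omega15_mul_B15_self]
  field_simp
  ring

/-- (Conformal vector of Theorem 4.17.) For every `n ≥ 1`,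
the vector `ω_n` satisfies `B(ω_n, t) = B(t, t)` for every symbol `t`, and
`2·B(ω_n, ω_n) = (n+2)(5n+29)/(5(n+7))`. -/
theorem stmt_15 (n : ℕ) (hn : 1 ≤ n) :
    (∀ t : Sym15 n, (∑ s : Sym15 n, omega15 n s * B15 n s t) = B15 n t t) ∧
    2 * (∑ s : Sym15 n, ∑ t : Sym15 n, omega15 n s * omega15 n t * B15 n s t)
      = ((n : ℚ) + 2) * (5 * (n : ℚ) + 29) / (5 * ((n : ℚ) + 7)) :=
  stmt_15_general n
end

section
/- Suppose u, a, b, c satisfy the 3A Griess relations, and set v = −(5/14)u + (16/21)(a + b + c). Then a·u = (2/3)a + (5/24)u − (7/24)v and a·v = (4/3)a − (5/24)u + (7/24)v. -/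
theorem stmt_18_general (V : Type*) [AddCommGroup V] [Module ℝ V]
    (mul : V →ₗ[ℝ] V →ₗ[ℝ] V)
    (hcomm : ∀ s t : V, mul s t = mul t s)
    (u a b c : V)
    (haa : mul a a = (2 : ℝ) • a)
    (hab : mul a b = -(135 / 2 ^ 10 : ℝ) • u + (1 / 8 : ℝ) • (a + b) + (1 / 16 : ℝ) • c)
    (hca : mul c a = -(135 / 2 ^ 10 : ℝ) • u + (1 / 8 : ℝ) • (c + a) + (1 / 16 : ℝ) • b)
    (hua : mul u a = (5 / 16 : ℝ) • u + (4 / 9 : ℝ) • a - (2 / 9 : ℝ) • (b + c)) :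
    ∀ v : V, v = -(5 / 14 : ℝ) • u + (16 / 21 : ℝ) • (a + b + c) →
      mul a u = (2 / 3 : ℝ) • a + (5 / 24 : ℝ) • u - (7 / 24 : ℝ) • v ∧
      mul a v = (4 / 3 : ℝ) • a - (5 / 24 : ℝ) • u + (7 / 24 : ℝ) • v := by
  rintro v rfl
  have hau : mul a u = (5 / 16 : ℝ) • u + (4 / 9 : ℝ) • a - (2 / 9 : ℝ) • (b + c) := by
    rw [hcomm, hua]
  have hac : mul a c = -(135 / 2 ^ 10 : ℝ) • u + (1 / 8 : ℝ) • (c + a) + (1 / 16 : ℝ) • b := by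
    rw [hcomm, hca]
  constructor
  · rw [hau]
    module
  · simp only [map_add, map_smul, hau, haa, hab, hac]
    module

/-- In the Griess algebra of the dihedral 3A-algebra, with
`v = -(5/14)u + (16/21)(a+b+c)` the characteristic `c = 6/7` Virasoro vector,
one has `a·u = (2/3)a + (5/24)u - (7/24)v` and `a·v = (4/3)a - (5/24)u + (7/24)v`. -/
theorem stmt_18 (V : Type*) [AddCommGroup V] [Module ℝ V]
    (mul : V →ₗ[ℝ] V →ₗ[ℝ] V)
    (hcomm : ∀ s t : V, mul s t = mul t s)
    (B : V →ₗ[ℝ] V →ₗ[ℝ] ℝ)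
    (hsymm : ∀ s t : V, B s t = B t s)
    (u a b c : V)
    (huu : mul u u = (2 : ℝ) • u)
    (haa : mul a a = (2 : ℝ) • a)
    (hbb : mul b b = (2 : ℝ) • b)
    (hcc : mul c c = (2 : ℝ) • c)
    (hab : mul a b = -(135 / 2 ^ 10 : ℝ) • u + (1 / 8 : ℝ) • (a + b) + (1 / 16 : ℝ) • c)
    (hbc : mul b c = -(135 / 2 ^ 10 : ℝ) • u + (1 / 8 : ℝ) • (b + c) + (1 / 16 : ℝ) • a)
    (hca : mul c a = -(135 / 2 ^ 10 : ℝ) • u + (1 / 8 : ℝ) • (c + a) + (1 / 16 : ℝ) • b)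
    (hua : mul u a = (5 / 16 : ℝ) • u + (4 / 9 : ℝ) • a - (2 / 9 : ℝ) • (b + c))
    (hub : mul u b = (5 / 16 : ℝ) • u + (4 / 9 : ℝ) • b - (2 / 9 : ℝ) • (c + a))
    (huc : mul u c = (5 / 16 : ℝ) • u + (4 / 9 : ℝ) • c - (2 / 9 : ℝ) • (a + b))
    (hBuu : B u u = 2 / 5)
    (hBaa : B a a = 1 / 4) (hBbb : B b b = 1 / 4) (hBcc : B c c = 1 / 4)
    (hBab : B a b = 13 / 2 ^ 10) (hBbc : B b c = 13 / 2 ^ 10) (hBca : B c a = 13 / 2 ^ 10)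
    (hBua : B u a = 1 / 16) (hBub : B u b = 1 / 16) (hBuc : B u c = 1 / 16) :
    ∀ v : V, v = -(5 / 14 : ℝ) • u + (16 / 21 : ℝ) • (a + b + c) →
      mul a u = (2 / 3 : ℝ) • a + (5 / 24 : ℝ) • u - (7 / 24 : ℝ) • v ∧
      mul a v = (4 / 3 : ℝ) • a - (5 / 24 : ℝ) • u + (7 / 24 : ℝ) • v :=
  stmt_18_general V mul hcomm u a b c haa hab hca hua
end
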